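/- arXiv:2603.22877 — 3 statements merged into one kernel-verified Lean document; each statement's English description precedes it below -/
import Mathlib

section
/- Let C be a finite set of constraints with weights w_c > 0, and let each constraint c define a function f_c : {-1,1}^n × ℝ^m → {-1,1} (where -1 denotes True). Let F_w(a,b) = Σ_{c∈C} w_c · f_c(a,b) denote the weighted sum of the multilinear extensions of the f_c over [-1,1]^n × ℝ^m. Then the conjunction ∧_{c∈C} c is satisfiable (i.e., there exists (x,y) ∈ {-1,1}^n × ℝ^m with f_c(x,y) = -1 for all c) if and only if min over (a,b) ∈ [-1,1]^n × ℝ^m of F_w(a,b) equals -Σ_{c∈C} w_c. -/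
open Finset

/-- The multilinear extension of `fB : {-1,1}^n × ℝ^m → ℝ` (Booleans encoded by `Bool`,
`true ↦ +1`), given by the expectation under randomized rounding with parameter `a`. -/
noncomputable def mlext (n m : ℕ) (fB : (Fin n → Bool) → (Fin m → ℝ) → ℝ)
    (a : Fin n → ℝ) (b : Fin m → ℝ) : ℝ :=
  ∑ x : Fin n → Bool, (∏ i, if x i then (1 + a i) / 2 else (1 - a i) / 2) * fB x b

lemma mu_nonneg {n : ℕ} {a : Fin n → ℝ} (ha : ∀ i, a i ∈ Set.Icc (-1:ℝ) 1)
    (x : Fin n → Bool) :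
    0 ≤ ∏ i, (if x i then (1 + a i) / 2 else (1 - a i) / 2) :=
  Finset.prod_nonneg fun i _ => by
    rcases ha i with ⟨h1, h2⟩; split <;> linarith

lemma mu_sum {n : ℕ} (a : Fin n → ℝ) :
    ∑ x : Fin n → Bool, ∏ i, (if x i then (1 + a i) / 2 else (1 - a i) / 2) = 1 := by
  have := Finset.prod_univ_sum (fun _ : Fin n => (Finset.univ : Finset Bool))
    (fun i b => if b then (1 + a i) / 2 else (1 - a i) / 2)
  rw [Fintype.piFinset_univ] at this
  rw [← this]
  rw [show (1:ℝ) = ∏ i : Fin n, 1 by simp]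
  refine Finset.prod_congr rfl fun i _ => ?_
  rw [Fintype.sum_bool]
  norm_num
  ring

lemma mlext_point {n m : ℕ} (fB : (Fin n → Bool) → (Fin m → ℝ) → ℝ)
    (x : Fin n → Bool) (b : Fin m → ℝ) :
    mlext n m fB (fun i => if x i then 1 else -1) b = fB x b := by
  unfold mlext
  rw [Finset.sum_eq_single x]
  · rw [show (∏ i, if x i then (1 + (if x i then (1:ℝ) else -1)) / 2
        else (1 - (if x i then (1:ℝ) else -1)) / 2) = 1 from ?_]
    · ring
    · apply Finset.prod_eq_one
      intro i _
      by_cases h : x i <;> simp [h] <;> norm_num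
  · intro x' _ hne
    have : ∃ i, x' i ≠ x i := by
      by_contra h
      push_neg at h
      exact hne (funext h)
    obtain ⟨i, hi⟩ := this
    rw [Finset.prod_eq_zero (Finset.mem_univ i), zero_mul]
    cases hxi : x i <;> cases hx'i : x' i <;> simp [hxi, hx'i] at hi ⊢ <;> norm_num
  · simp

lemma mlext_ge {n m : ℕ} {fB : (Fin n → Bool) → (Fin m → ℝ) → ℝ}
    {a : Fin n → ℝ} (ha : ∀ i, a i ∈ Set.Icc (-1:ℝ) 1) (b : Fin m → ℝ)
    (hf : ∀ x, -1 ≤ fB x b) : -1 ≤ mlext n m fB a b := by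
  have : (-1 : ℝ) = ∑ x : Fin n → Bool,
      (∏ i, (if x i then (1 + a i) / 2 else (1 - a i) / 2)) * (-1) := by
    rw [← Finset.sum_mul, mu_sum a]; ring
  rw [this]
  exact Finset.sum_le_sum fun x _ =>
    mul_le_mul_of_nonneg_left (hf x) (mu_nonneg ha x)

/-- **Soundness.** For constraints `fB c : {-1,1}^n × ℝ^m → {-1,1}` (with `-1` = True)
and positive weights `w`, the conjunction is satisfiable iff the minimum of the weighted
sum of multilinear extensions `F_w(a,b) = Σ_c w_c · f_c(a,b)` over `[-1,1]^n × ℝ^m`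
equals `-Σ_c w_c` (the minimum being attained). -/
theorem soundness {ι : Type*} [Fintype ι] (n m : ℕ) (w : ι → ℝ) (hw : ∀ c, 0 < w c)
    (fB : ι → (Fin n → Bool) → (Fin m → ℝ) → ℝ)
    (hfB : ∀ c x y, fB c x y = -1 ∨ fB c x y = 1) :
    (∃ (x : Fin n → Bool) (y : Fin m → ℝ), ∀ c, fB c x y = -1) ↔
      IsLeast
        ((fun p : (Fin n → ℝ) × (Fin m → ℝ) => ∑ c, w c * mlext n m (fB c) p.1 p.2) ''
          {p | ∀ i, p.1 i ∈ Set.Icc (-1 : ℝ) 1})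
        (-∑ c, w c) := by
  have hge : ∀ c (x : Fin n → Bool) (y : Fin m → ℝ), -1 ≤ fB c x y := by
    intro c x y; rcases hfB c x y with h | h <;> rw [h] <;> norm_num
  constructor
  · rintro ⟨x, y, hxy⟩
    constructor
    · refine ⟨(fun i => if x i then 1 else -1, y), fun i => ?_, ?_⟩
      · by_cases h : x i <;> simp [h] <;> norm_num
      · simp only
        rw [Finset.sum_congr rfl fun c _ => by rw [mlext_point, hxy c, mul_neg_one]]
        rw [Finset.sum_neg_distrib]
    · rintro v ⟨⟨a, b⟩, hab, rfl⟩
      rw [← Finset.sum_neg_distrib]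
      refine Finset.sum_le_sum fun c _ => ?_
      have := mlext_ge hab b (fun x => hge c x b)
      nlinarith [hw c]
  · rintro ⟨⟨⟨a, b⟩, hab, heq⟩, _⟩
    simp only at heq
    -- each term equals -w c
    have hterm : ∀ c, mlext n m (fB c) a b = -1 := by
      intro c
      have hsum0 : ∑ c, (w c * mlext n m (fB c) a b + w c) = 0 := by
        rw [Finset.sum_add_distrib, heq]; ring
      have hnn : ∀ c ∈ Finset.univ, 0 ≤ w c * mlext n m (fB c) a b + w c := by
        intro c _
        have := mlext_ge hab b (fun x => hge c x b)
        nlinarith [hw c]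
      have := (Finset.sum_eq_zero_iff_of_nonneg hnn).mp hsum0 c (Finset.mem_univ c)
      have hwc := hw c
      nlinarith
    -- find x with positive weight
    have hsum1 := mu_sum a
    have : ∃ x : Fin n → Bool,
        (∏ i, (if x i then (1 + a i) / 2 else (1 - a i) / 2)) ≠ 0 := by
      by_contra h
      push_neg at h
      rw [Finset.sum_eq_zero (fun x _ => h x)] at hsum1
      norm_num at hsum1
    obtain ⟨x, hx⟩ := this
    have hxpos : 0 < ∏ i, (if x i then (1 + a i) / 2 else (1 - a i) / 2) :=
      lt_of_le_of_ne (mu_nonneg hab x) (Ne.symm hx)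
    refine ⟨x, b, fun c => ?_⟩
    have h0 : ∑ x : Fin n → Bool,
        (∏ i, (if x i then (1 + a i) / 2 else (1 - a i) / 2)) * (fB c x b + 1) = 0 := by
      have := hterm c
      unfold mlext at this
      rw [Finset.sum_congr rfl fun x _ => mul_add _ _ _, Finset.sum_add_distrib,
        this, Finset.sum_congr rfl fun x _ => mul_one _, hsum1]
      ring
    have hnn : ∀ x ∈ (Finset.univ : Finset (Fin n → Bool)),
        0 ≤ (∏ i, (if x i then (1 + a i) / 2 else (1 - a i) / 2)) * (fB c x b + 1) := by
      intro x _
      have := hge c x b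
      have := mu_nonneg hab x
      nlinarith
    have := (Finset.sum_eq_zero_iff_of_nonneg hnn).mp h0 x (Finset.mem_univ x)
    rcases mul_eq_zero.mp this with h | h
    · exact absurd h hx
    · linarith
end

section
/- Let h : ℝ^n → ℝ be a non-constant multilinear polynomial (each variable appears with degree at most one). Then for every point a ∈ ℝ^n there exist ε₀ > 0 and directions v⁺, v⁻ ∈ ℝ^n such that for all ε ∈ (0, ε₀): h(a + εv⁺) > h(a) and h(a + εv⁻) < h(a). In particular, h has no local extrema. -/
open Finset

/-!
Expanding around `a` gives `h (a + x) = ∑_T c_T ∏_{i ∈ T} x_i` with `c_∅ = h a`, and the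
coefficients of inclusion-maximal monomials are unchanged, so some `c_T` with `T ≠ ∅` is nonzero.
Take such a `T` inclusion-minimal. Along `x = ε v` with `v` supported on `T`, every other term
with `T' ≠ ∅` vanishes, so `h (a + ε v) = h a + c_T ε^|T| ∏_{i ∈ T} v_i`. Setting one coordinate
of `v` to `±c_T` and the others to `1` yields the increasing and the decreasing direction.
-/

section Expansion

variable {ι R : Type*} [Fintype ι] [DecidableEq ι] [CommSemiring R]

def multilinearEval (p : Finset ι → R) (x : ι → R) : R :=
  ∑ S, p S * ∏ i ∈ S, x i

def shiftCoeff (p : Finset ι → R) (a : ι → R) (T : Finset ι) : R :=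
  ∑ S with T ⊆ S, p S * ∏ i ∈ S \ T, a i

theorem multilinearEval_add (p : Finset ι → R) (a x : ι → R) :
    multilinearEval p (a + x) = multilinearEval (shiftCoeff p a) x := by
  have hterm (S : Finset ι) : p S * ∏ i ∈ S, (a + x) i =
      ∑ T, if T ⊆ S then (p S * ∏ i ∈ S \ T, a i) * ∏ i ∈ T, x i else 0 := by
    rw [← sum_filter, filter_subset_univ, Pi.add_def]
    simp_rw [add_comm (a _), prod_add, mul_sum]
    exact sum_congr rfl fun T _ => by ring
  simp only [multilinearEval, shiftCoeff, hterm, sum_filter, sum_mul, ite_mul, zero_mul]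
  exact sum_comm

theorem shiftCoeff_empty (p : Finset ι → R) (a : ι → R) :
    shiftCoeff p a ∅ = multilinearEval p a := by
  simp [shiftCoeff, multilinearEval]

theorem shiftCoeff_eq_of_forall_ssubset {p : Finset ι → R} {T : Finset ι}
    (hmax : ∀ S, T ⊂ S → p S = 0) (a : ι → R) : shiftCoeff p a T = p T := by
  rw [shiftCoeff, sum_eq_single_of_mem T (by simp)]
  · simp
  · intro S hS hST
    rw [hmax S ((mem_filter.1 hS).2.ssubset_of_ne (Ne.symm hST)), zero_mul]

theorem exists_minimal_shiftCoeff_ne_zero {p : Finset ι → R}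
    (hp : ∃ S : Finset ι, S ≠ ∅ ∧ p S ≠ 0) (a : ι → R) :
    ∃ T : Finset ι, T.Nonempty ∧ shiftCoeff p a T ≠ 0 ∧
      ∀ T' ⊂ T, T'.Nonempty → shiftCoeff p a T' = 0 := by
  obtain ⟨S, ⟨hS, hpS⟩, hSmax⟩ := wellFounded_gt.has_min {S : Finset ι | S ≠ ∅ ∧ p S ≠ 0} hp
  have hqS : shiftCoeff p a S ≠ 0 := by
    rwa [shiftCoeff_eq_of_forall_ssubset]
    intro S' hSS'
    by_contra h
    exact hSmax S' ⟨((nonempty_iff_ne_empty.2 hS).mono hSS'.subset).ne_empty, h⟩ hSS'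
  obtain ⟨T, ⟨hT, hqT⟩, hTmin⟩ := wellFounded_lt.has_min
    {T : Finset ι | T.Nonempty ∧ shiftCoeff p a T ≠ 0} ⟨S, nonempty_iff_ne_empty.2 hS, hqS⟩
  exact ⟨T, hT, hqT, fun T' hT' hT'ne => by_contra fun h => hTmin T' ⟨hT'ne, h⟩ hT'⟩

end Expansion

section Direction

variable {ι R : Type*} [DecidableEq ι] [CommSemiring R]

def tiltedIndicator (T : Finset ι) (i₀ : ι) (σ : R) : ι → R :=
  Function.update (fun i => if i ∈ T then 1 else 0) i₀ σ

theorem prod_smul_tiltedIndicator {T : Finset ι} {i₀ : ι} (hi₀ : i₀ ∈ T) (σ ε : R) :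
    ∏ i ∈ T, (ε • tiltedIndicator T i₀ σ) i = σ * ε ^ #T := by
  simp only [Pi.smul_apply, smul_eq_mul, prod_mul_distrib, prod_const, tiltedIndicator,
    prod_update_of_mem hi₀]
  rw [prod_eq_one fun i hi => if_pos (mem_sdiff.1 hi).1]
  ring

theorem prod_smul_tiltedIndicator_of_not_subset {S T : Finset ι} {i₀ : ι} (hi₀ : i₀ ∈ T)
    (hST : ¬ S ⊆ T) (σ ε : R) : ∏ i ∈ S, (ε • tiltedIndicator T i₀ σ) i = 0 := by
  obtain ⟨i, hiS, hiT⟩ := not_subset.1 hST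
  refine prod_eq_zero hiS ?_
  simp [tiltedIndicator, Function.update_of_ne (ne_of_mem_of_not_mem hi₀ hiT).symm, hiT]

theorem multilinearEval_smul_tiltedIndicator [Fintype ι] {q : Finset ι → R} {T : Finset ι}
    {i₀ : ι} (hi₀ : i₀ ∈ T) (hmin : ∀ T' ⊂ T, T'.Nonempty → q T' = 0) (σ ε : R) :
    multilinearEval q (ε • tiltedIndicator T i₀ σ) = q ∅ + q T * σ * ε ^ #T := by
  have hT : (∅ : Finset ι) ≠ T := (ne_empty_of_mem hi₀).symm
  rw [multilinearEval, ← sum_subset (subset_univ {∅, T}), sum_pair hT, prod_empty,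
    prod_smul_tiltedIndicator hi₀, mul_one, mul_assoc]
  intro S _ hS
  simp only [mem_insert, mem_singleton, not_or] at hS
  by_cases hST : S ⊆ T
  · rw [hmin S (hST.ssubset_of_ne hS.2) (nonempty_iff_ne_empty.2 hS.1), zero_mul]
  · rw [prod_smul_tiltedIndicator_of_not_subset hi₀ hST, mul_zero]

end Direction

open Filter Topology in
theorem exists_pos_add_smul_mem {E : Type*} [TopologicalSpace E] [AddCommGroup E] [Module ℝ E]
    [ContinuousAdd E] [ContinuousSMul ℝ E] {a : E} {s : Set E} (hs : s ∈ 𝓝 a) (v : E) :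
    ∃ ε : ℝ, 0 < ε ∧ a + ε • v ∈ s := by
  have hray : Tendsto (fun ε : ℝ => a + ε • v) (𝓝[>] 0) (𝓝 a) := by
    have : Continuous fun ε : ℝ => a + ε • v := by fun_prop
    simpa using (this.tendsto 0).mono_left nhdsWithin_le_nhds
  exact ((hray.eventually hs).and self_mem_nhdsWithin).exists.imp fun _ h => ⟨h.2, h.1⟩

theorem not_isLocalExtr_of_forall_pos {E β : Type*} [TopologicalSpace E] [AddCommGroup E]
    [Module ℝ E] [ContinuousAdd E] [ContinuousSMul ℝ E] [Preorder β] {f : E → β} {a vp vm : E}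
    (hup : ∀ ε : ℝ, 0 < ε → f a < f (a + ε • vp))
    (hdown : ∀ ε : ℝ, 0 < ε → f (a + ε • vm) < f a) : ¬ IsLocalExtr f a := by
  rintro (hmin | hmax)
  · obtain ⟨ε, hε, hle⟩ := exists_pos_add_smul_mem hmin vm
    exact (hdown ε hε).not_ge hle
  · obtain ⟨ε, hε, hle⟩ := exists_pos_add_smul_mem hmax vp
    exact (hup ε hε).not_ge hle

/-- **Non-constant multilinear polynomials have no local extrema.** If
`h(a) = Σ_{S⊆[n]} ĥ(S) ∏_{i∈S} a_i` is a multilinear polynomial with some nonzero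
coefficient `ĥ(S)` for `S ≠ ∅`, then at every point `a` there are `ε₀ > 0` and
directions `v⁺, v⁻` with `h(a + εv⁺) > h(a)` and `h(a + εv⁻) < h(a)` for all
`ε ∈ (0, ε₀)`; in particular `h` has no local extremum at `a`. -/
theorem multilinear_no_local_extrema (n : ℕ)
    (hcoef : Finset (Fin n) → ℝ) (h : (Fin n → ℝ) → ℝ)
    (hrep : ∀ a, h a = ∑ S : Finset (Fin n), hcoef S * ∏ i ∈ S, a i)
    (hnc : ∃ S : Finset (Fin n), S ≠ ∅ ∧ hcoef S ≠ 0) :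
    ∀ a : Fin n → ℝ,
      (∃ ε₀ > (0 : ℝ), ∃ vp vm : Fin n → ℝ, ∀ ε ∈ Set.Ioo (0 : ℝ) ε₀,
        h a < h (a + ε • vp) ∧ h (a + ε • vm) < h a) ∧
      ¬ IsLocalExtr h a := by
  obtain rfl : h = multilinearEval hcoef := funext hrep
  intro a
  obtain ⟨T, ⟨i₀, hi₀⟩, hc, hmin⟩ := exists_minimal_shiftCoeff_ne_zero hnc a
  set c := shiftCoeff hcoef a T
  have hline (σ ε : ℝ) : multilinearEval hcoef (a + ε • tiltedIndicator T i₀ σ) =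
      multilinearEval hcoef a + c * σ * ε ^ #T := by
    rw [multilinearEval_add, multilinearEval_smul_tiltedIndicator hi₀ hmin, shiftCoeff_empty]
  have hlead (ε : ℝ) (hε : 0 < ε) : 0 < c * c * ε ^ #T :=
    mul_pos (mul_self_pos.2 hc) (pow_pos hε _)
  have hup (ε : ℝ) (hε : 0 < ε) :
      multilinearEval hcoef a < multilinearEval hcoef (a + ε • tiltedIndicator T i₀ c) := by
    rw [hline]
    linarith [hlead ε hε]
  have hdown (ε : ℝ) (hε : 0 < ε) :
      multilinearEval hcoef (a + ε • tiltedIndicator T i₀ (-c)) < multilinearEval hcoef a := by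
    rw [hline, mul_neg, neg_mul]
    linarith [hlead ε hε]
  exact ⟨⟨1, one_pos, _, _, fun ε hε => ⟨hup ε hε.1, hdown ε hε.1⟩⟩,
    not_isLocalExtr_of_forall_pos hup hdown⟩
end

section
/- In an ordered binary decision diagram with top-down messages m_td and bottom-up messages m_bu as defined above, for any variable index i, the circuit-output probability satisfies COP = Σ_{v : id(v) = i} m_td[v] · (p_i · m_bu[v.T] + (1-p_i) · m_bu[v.F]), and consequently its partial derivative with respect to p_i is ∂COP/∂p_i = Σ_{v : id(v) = i} m_td[v] · (m_bu[v.T] - m_bu[v.F]). -/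
open Finset

set_option linter.unusedSectionVars false
set_option maxHeartbeats 1000000

section AuxSum

variable {ν : Type} [Fintype ν] [DecidableEq ν]

lemma sum_prod_eq (r : ν → Bool → ℝ) :
    ∑ x : ν → Bool, ∏ w, r w (x w) = ∏ w, (r w true + r w false) := by
  rw [← Fintype.prod_sum (fun w b => r w b)]
  exact Finset.prod_congr rfl (fun w _ => by simp [Fintype.sum_bool])

lemma sum_prod_one (r : ν → Bool → ℝ) (hr : ∀ w, r w true + r w false = 1) :
    ∑ x : ν → Bool, ∏ w, r w (x w) = 1 := by
  rw [sum_prod_eq]; simp [hr]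

/-- merged function -/
def mrg (S : Set ν) [DecidablePred (· ∈ S)] (a : {w // w ∈ S} → Bool) (b : {w // w ∉ S} → Bool) :
    ν → Bool := fun w => if hw : w ∈ S then a ⟨w, hw⟩ else b ⟨w, hw⟩

lemma sum_split (q : ν → Bool → ℝ) (S : Set ν) [DecidablePred (· ∈ S)]
    (h : (ν → Bool) → ℝ) :
    ∑ x : ν → Bool, (∏ w, q w (x w)) * h x
      = ∑ a : {w // w ∈ S} → Bool, ∑ b : {w // w ∉ S} → Bool,
          ((∏ w : {w // w ∈ S}, q w.1 (a w)) * ∏ w : {w // w ∉ S}, q w.1 (b w))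
            * h (mrg S a b) := by
  classical
  set e := Equiv.piEquivPiSubtypeProd (· ∈ S) (fun _ : ν => Bool) with he
  have hsymm : ∀ (y : ({w // w ∈ S} → Bool) × ({w // w ∉ S} → Bool)),
      e.symm y = mrg S y.1 y.2 := by
    intro y; ext w
    simp [he, Equiv.piEquivPiSubtypeProd_symm_apply, mrg]
  rw [← Equiv.sum_comp e.symm (fun x => (∏ w, q w (x w)) * h x)]
  rw [Fintype.sum_prod_type]
  refine Finset.sum_congr rfl (fun a _ => Finset.sum_congr rfl (fun b _ => ?_))
  rw [hsymm (a, b)]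
  congr 1
  rw [← Fintype.prod_subtype_mul_prod_subtype (· ∈ S) (fun w => q w (mrg S a b w))]
  congr 1
  · exact Finset.prod_congr rfl (fun w _ => by simp [mrg, w.2])
  · exact Finset.prod_congr rfl (fun w _ => by simp [mrg, w.2])

lemma fact_indep (q : ν → Bool → ℝ) (hq : ∀ w, q w true + q w false = 1)
    (S : Set ν) [DecidablePred (· ∈ S)] (f g : (ν → Bool) → ℝ)
    (hf : ∀ x y, (∀ w ∈ S, x w = y w) → f x = f y)
    (hg : ∀ x y, (∀ w ∉ S, x w = y w) → g x = g y) :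
    ∑ x : ν → Bool, (∏ w, q w (x w)) * (f x * g x)
      = (∑ x : ν → Bool, (∏ w, q w (x w)) * f x)
        * (∑ x : ν → Bool, (∏ w, q w (x w)) * g x) := by
  classical
  have hfm : ∀ a b b', f (mrg S a b) = f (mrg S a b') := by
    intro a b b'; apply hf; intro w hw; simp [mrg, hw]
  have hgm : ∀ a a' b, g (mrg S a b) = g (mrg S a' b) := by
    intro a a' b; apply hg; intro w hw; simp [mrg, hw]
  set F : ({w // w ∈ S} → Bool) → ℝ := fun a => f (mrg S a (fun _ => true)) with hF
  set G : ({w // w ∉ S} → Bool) → ℝ := fun b => g (mrg S (fun _ => true) b) with hG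
  have h1 : ∑ x : ν → Bool, (∏ w, q w (x w)) * (f x * g x)
      = (∑ a : {w // w ∈ S} → Bool, (∏ w : {w // w ∈ S}, q w.1 (a w)) * F a)
        * (∑ b : {w // w ∉ S} → Bool, (∏ w : {w // w ∉ S}, q w.1 (b w)) * G b) := by
    rw [sum_split q S, Finset.sum_mul_sum]
    refine Finset.sum_congr rfl (fun a _ => Finset.sum_congr rfl (fun b _ => ?_))
    rw [show f (mrg S a b) = F a from hfm a b _, show g (mrg S a b) = G b from hgm a _ b]
    ring
  have hsum1 : ∑ b : {w // w ∉ S} → Bool, ∏ w : {w // w ∉ S}, q w.1 (b w) = 1 :=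
    sum_prod_one _ (fun w => hq w.1)
  have hsum2 : ∑ a : {w // w ∈ S} → Bool, ∏ w : {w // w ∈ S}, q w.1 (a w) = 1 :=
    sum_prod_one _ (fun w => hq w.1)
  have h2 : ∑ x : ν → Bool, (∏ w, q w (x w)) * f x
      = ∑ a : {w // w ∈ S} → Bool, (∏ w : {w // w ∈ S}, q w.1 (a w)) * F a := by
    rw [sum_split q S]
    have : ∀ a : {w // w ∈ S} → Bool,
        (∑ b : {w // w ∉ S} → Bool,
          ((∏ w : {w // w ∈ S}, q w.1 (a w)) * ∏ w : {w // w ∉ S}, q w.1 (b w))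
            * f (mrg S a b))
        = (∏ w : {w // w ∈ S}, q w.1 (a w)) * F a := by
      intro a
      have : ∀ b : {w // w ∉ S} → Bool,
          ((∏ w : {w // w ∈ S}, q w.1 (a w)) * ∏ w : {w // w ∉ S}, q w.1 (b w))
            * f (mrg S a b)
          = ((∏ w : {w // w ∈ S}, q w.1 (a w)) * F a) * ∏ w : {w // w ∉ S}, q w.1 (b w) := by
        intro b; rw [show f (mrg S a b) = F a from hfm a b _]; ring
      rw [Finset.sum_congr rfl (fun b _ => this b), ← Finset.mul_sum, hsum1, mul_one]
    exact Finset.sum_congr rfl (fun a _ => this a)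
  have h3 : ∑ x : ν → Bool, (∏ w, q w (x w)) * g x
      = ∑ b : {w // w ∉ S} → Bool, (∏ w : {w // w ∉ S}, q w.1 (b w)) * G b := by
    rw [sum_split q S, Finset.sum_comm]
    have : ∀ b : {w // w ∉ S} → Bool,
        (∑ a : {w // w ∈ S} → Bool,
          ((∏ w : {w // w ∈ S}, q w.1 (a w)) * ∏ w : {w // w ∉ S}, q w.1 (b w))
            * g (mrg S a b))
        = (∏ w : {w // w ∉ S}, q w.1 (b w)) * G b := by
      intro b
      have : ∀ a : {w // w ∈ S} → Bool,
          ((∏ w : {w // w ∈ S}, q w.1 (a w)) * ∏ w : {w // w ∉ S}, q w.1 (b w))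
            * g (mrg S a b)
          = ((∏ w : {w // w ∉ S}, q w.1 (b w)) * G b) * ∏ w : {w // w ∈ S}, q w.1 (a w) := by
        intro a; rw [show g (mrg S a b) = G b from hgm a _ b]; ring
      rw [Finset.sum_congr rfl (fun a _ => this a), ← Finset.mul_sum, hsum2, mul_one]
    exact Finset.sum_congr rfl (fun b _ => this b)
  rw [h1, h2, h3]

lemma marg_indep (q q' : ν → Bool → ℝ)
    (hq : ∀ w, q w true + q w false = 1) (hq' : ∀ w, q' w true + q' w false = 1)
    (S : Set ν) [DecidablePred (· ∈ S)] (hqq : ∀ w ∈ S, q w = q' w)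
    (f : (ν → Bool) → ℝ) (hf : ∀ x y, (∀ w ∈ S, x w = y w) → f x = f y) :
    ∑ x : ν → Bool, (∏ w, q w (x w)) * f x
      = ∑ x : ν → Bool, (∏ w, q' w (x w)) * f x := by
  classical
  have hfm : ∀ a b b', f (mrg S a b) = f (mrg S a b') := by
    intro a b b'; apply hf; intro w hw; simp [mrg, hw]
  set F : ({w // w ∈ S} → Bool) → ℝ := fun a => f (mrg S a (fun _ => true)) with hF
  have key : ∀ (r : ν → Bool → ℝ), (∀ w, r w true + r w false = 1) →
      (∀ w ∈ S, r w = q' w) →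
      ∑ x : ν → Bool, (∏ w, r w (x w)) * f x
        = ∑ a : {w // w ∈ S} → Bool, (∏ w : {w // w ∈ S}, q' w.1 (a w)) * F a := by
    intro r hr hrq
    rw [sum_split r S]
    refine Finset.sum_congr rfl (fun a _ => ?_)
    have hsum1 : ∑ b : {w // w ∉ S} → Bool, ∏ w : {w // w ∉ S}, r w.1 (b w) = 1 :=
      sum_prod_one _ (fun w => hr w.1)
    have : ∀ b : {w // w ∉ S} → Bool,
        ((∏ w : {w // w ∈ S}, r w.1 (a w)) * ∏ w : {w // w ∉ S}, r w.1 (b w))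
          * f (mrg S a b)
        = ((∏ w : {w // w ∈ S}, q' w.1 (a w)) * F a) * ∏ w : {w // w ∉ S}, r w.1 (b w) := by
      intro b
      rw [show f (mrg S a b) = F a from hfm a b _,
        show (∏ w : {w // w ∈ S}, r w.1 (a w)) = ∏ w : {w // w ∈ S}, q' w.1 (a w) from
          Finset.prod_congr rfl (fun w _ => by rw [hrq w.1 w.2])]
      ring
    rw [Finset.sum_congr rfl (fun b _ => this b), ← Finset.mul_sum, hsum1, mul_one]
  rw [key q hq hqq, key q' hq' (fun w _ => rfl)]

lemma exp_coord (q : ν → Bool → ℝ) (hq : ∀ w, q w true + q w false = 1)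
    (i : ν) (a b : ℝ) :
    ∑ x : ν → Bool, (∏ w, q w (x w)) * (if x i then a else b)
      = q i true * a + q i false * b := by
  classical
  set r : ν → Bool → ℝ := fun w b' =>
    if w = i then q w b' * (if b' then a else b) else q w b' with hr
  have h1 : ∀ x : ν → Bool, (∏ w, q w (x w)) * (if x i then a else b)
      = ∏ w, r w (x w) := by
    intro x
    rw [Finset.prod_eq_mul_prod_sdiff_singleton_of_mem (Finset.mem_univ i) (fun w => r w (x w)),
      Finset.prod_eq_mul_prod_sdiff_singleton_of_mem (Finset.mem_univ i) (fun w => q w (x w))]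
    have h2 : ∏ w ∈ Finset.univ \ {i}, r w (x w) = ∏ w ∈ Finset.univ \ {i}, q w (x w) := by
      refine Finset.prod_congr rfl (fun w hw => ?_)
      have : w ≠ i := by simp at hw; exact hw
      simp [hr, this]
    rw [h2]
    simp [hr]
    ring
  rw [Finset.sum_congr rfl (fun x _ => h1 x), sum_prod_eq]
  rw [Finset.prod_eq_mul_prod_sdiff_singleton_of_mem (Finset.mem_univ i)
    (fun w => r w true + r w false)]
  have h3 : ∏ w ∈ Finset.univ \ {i}, (r w true + r w false) = 1 := by
    refine Finset.prod_eq_one (fun w hw => ?_)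
    have : w ≠ i := by simp at hw; exact hw
    simp [hr, this, hq w]
  rw [h3]
  simp [hr]

end AuxSum

section Walk

variable {ν V : Type} [Fintype ν] [DecidableEq ν] [Fintype V] [DecidableEq V]
variable (internal : Finset V) (Tc Fc : V → V) (lab : V → ν)

/-- `n`-step evaluation walk in the BDD starting at `v`, driven by assignment `x`. -/
def Ev (x : ν → Bool) : ℕ → V → V
  | 0, v => v
  | n+1, v => if v ∈ internal then Ev x n (if x (lab v) then Tc v else Fc v) else v

lemma Ev_nonint (x : ν → Bool) (n : ℕ) (v : V) (hv : v ∉ internal) :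
    Ev internal Tc Fc lab x n v = v := by
  cases n with
  | zero => rfl
  | succ n => simp [Ev, hv]

lemma Ev_add (x : ν → Bool) (m n : ℕ) (v : V) :
    Ev internal Tc Fc lab x (m + n) v
      = Ev internal Tc Fc lab x n (Ev internal Tc Fc lab x m v) := by
  induction m generalizing v with
  | zero => simp [Ev]
  | succ m ih =>
    by_cases hv : v ∈ internal
    · have h1 : m + 1 + n = (m + n) + 1 := by omega
      rw [h1]
      show (if v ∈ internal then Ev internal Tc Fc lab x (m+n) _ else v) = _
      rw [if_pos hv, ih]
      congr 1
      show _ = (if v ∈ internal then Ev internal Tc Fc lab x m _ else v)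
      rw [if_pos hv]
    · rw [Ev_nonint _ _ _ _ _ _ _ hv, Ev_nonint _ _ _ _ _ _ _ hv,
        Ev_nonint _ _ _ _ _ _ _ hv]

lemma Ev_succ' (x : ν → Bool) (n : ℕ) (v : V) :
    Ev internal Tc Fc lab x (n + 1) v
      = if Ev internal Tc Fc lab x n v ∈ internal then
          (if x (lab (Ev internal Tc Fc lab x n v)) then Tc (Ev internal Tc Fc lab x n v)
            else Fc (Ev internal Tc Fc lab x n v))
        else Ev internal Tc Fc lab x n v := by
  rw [Ev_add internal Tc Fc lab x n 1]
  set u := Ev internal Tc Fc lab x n v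
  by_cases hu : u ∈ internal
  · simp [Ev, hu]
  · simp [Ev, hu]

variable (ord : ν → ℕ)

lemma Ev_chain_lt
    (horder : ∀ u ∈ internal,
      (Tc u ∈ internal → ord (lab u) < ord (lab (Tc u))) ∧
      (Fc u ∈ internal → ord (lab u) < ord (lab (Fc u))))
    (x : ν → Bool) (v : V) (n : ℕ)
    (hall : ∀ k, k ≤ n → Ev internal Tc Fc lab x k v ∈ internal) :
    ∀ k l, k < l → l ≤ n →
      ord (lab (Ev internal Tc Fc lab x k v)) < ord (lab (Ev internal Tc Fc lab x l v)) := by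
  have hstep : ∀ k, k + 1 ≤ n →
      ord (lab (Ev internal Tc Fc lab x k v))
        < ord (lab (Ev internal Tc Fc lab x (k+1) v)) := by
    intro k hk
    have hk1 : Ev internal Tc Fc lab x k v ∈ internal := hall k (by omega)
    have hk2 : Ev internal Tc Fc lab x (k+1) v ∈ internal := hall (k+1) hk
    rw [Ev_succ' internal Tc Fc lab x k v, if_pos hk1] at hk2 ⊢
    by_cases hb : x (lab (Ev internal Tc Fc lab x k v))
    · rw [if_pos hb] at hk2 ⊢
      exact (horder _ hk1).1 hk2
    · rw [if_neg hb] at hk2 ⊢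
      exact (horder _ hk1).2 hk2
  intro k l hkl hln
  induction l with
  | zero => omega
  | succ l ih =>
    rcases Nat.lt_succ_iff_lt_or_eq.mp hkl with h | h
    · exact lt_trans (ih h (by omega)) (hstep l hln)
    · rw [h]; exact hstep l hln

lemma Ev_exit
    (horder : ∀ u ∈ internal,
      (Tc u ∈ internal → ord (lab u) < ord (lab (Tc u))) ∧
      (Fc u ∈ internal → ord (lab u) < ord (lab (Fc u))))
    (x : ν → Bool) (v : V) :
    ∃ k ≤ internal.card, Ev internal Tc Fc lab x k v ∉ internal := by
  by_contra hcon
  push_neg at hcon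
  have hall : ∀ k, k ≤ internal.card → Ev internal Tc Fc lab x k v ∈ internal := hcon
  have hinj : Set.InjOn (fun k => Ev internal Tc Fc lab x k v)
      ↑(Finset.range (internal.card + 1)) := by
    intro k hk l hl hkl
    simp only [Finset.coe_range, Set.mem_Iio] at hk hl
    simp only at hkl
    by_contra hne
    rcases Nat.lt_or_ge k l with h | h
    · have := Ev_chain_lt internal Tc Fc lab ord horder x v internal.card hall k l h (by omega)
      rw [hkl] at this; omega
    · have hlk : l < k := by omega
      have := Ev_chain_lt internal Tc Fc lab ord horder x v internal.card hall l k hlk (by omega)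
      rw [hkl] at this; omega
  have hsub : (Finset.range (internal.card + 1)).image
      (fun k => Ev internal Tc Fc lab x k v) ⊆ internal := by
    intro u hu
    simp only [Finset.mem_image, Finset.mem_range] at hu
    obtain ⟨k, hk, rfl⟩ := hu
    exact hall k (by omega)
  have h1 := Finset.card_le_card hsub
  rw [Finset.card_image_of_injOn hinj, Finset.card_range] at h1
  omega

lemma Ev_ge
    (horder : ∀ u ∈ internal,
      (Tc u ∈ internal → ord (lab u) < ord (lab (Tc u))) ∧
      (Fc u ∈ internal → ord (lab u) < ord (lab (Fc u))))
    (x : ν → Bool) (v : V) (m : ℕ) (hm : internal.card ≤ m) :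
    Ev internal Tc Fc lab x m v = Ev internal Tc Fc lab x internal.card v := by
  obtain ⟨k, hk, hout⟩ := Ev_exit internal Tc Fc lab ord horder x v
  have h1 : ∀ j, k ≤ j → Ev internal Tc Fc lab x j v = Ev internal Tc Fc lab x k v := by
    intro j hj
    have : j = k + (j - k) := by omega
    rw [this, Ev_add, Ev_nonint _ _ _ _ _ _ _ hout]
  rw [h1 m (by omega), h1 internal.card hk]

lemma Ev_N_nonint
    (horder : ∀ u ∈ internal,
      (Tc u ∈ internal → ord (lab u) < ord (lab (Tc u))) ∧
      (Fc u ∈ internal → ord (lab u) < ord (lab (Fc u))))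
    (x : ν → Bool) (v : V) :
    Ev internal Tc Fc lab x (internal.card + 1) v ∉ internal := by
  obtain ⟨k, hk, hout⟩ := Ev_exit internal Tc Fc lab ord horder x v
  have : internal.card + 1 = k + (internal.card + 1 - k) := by omega
  rw [this, Ev_add, Ev_nonint _ _ _ _ _ _ _ hout]
  exact hout

lemma Ev_rec_N
    (horder : ∀ u ∈ internal,
      (Tc u ∈ internal → ord (lab u) < ord (lab (Tc u))) ∧
      (Fc u ∈ internal → ord (lab u) < ord (lab (Fc u))))
    (x : ν → Bool) (v : V) (hv : v ∈ internal) :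
    Ev internal Tc Fc lab x (internal.card + 1) v
      = Ev internal Tc Fc lab x (internal.card + 1)
          (if x (lab v) then Tc v else Fc v) := by
  show (if v ∈ internal then _ else v) = _
  rw [if_pos hv]
  rw [Ev_ge internal Tc Fc lab ord horder x _ internal.card le_rfl,
    Ev_ge internal Tc Fc lab ord horder x _ (internal.card + 1) (by omega)]

end Walk

section Reach

variable {ν V : Type} [Fintype ν] [DecidableEq ν] [Fintype V] [DecidableEq V]
variable (internal : Finset V) (Tc Fc : V → V) (lab : V → ν) (ord : ν → ℕ)
variable (root : V) (reach : (ν → Bool) → V → Bool)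


lemma seq_reach (hroot : ∀ u ∈ internal, Tc u ≠ root ∧ Fc u ≠ root)
    (hreach_root : ∀ x, reach x root = true)
    (hreach : ∀ x v, v ≠ root →
      (reach x v = true ↔ ∃ u ∈ internal, reach x u = true ∧
        ((x (lab u) = true ∧ Tc u = v) ∨ (x (lab u) = false ∧ Fc u = v))))
    (x : ν → Bool) (k : ℕ) :
    reach x (Ev internal Tc Fc lab x k root) = true := by
  induction k with
  | zero => exact hreach_root x
  | succ k ih =>
    rw [Ev_succ' internal Tc Fc lab x k root]
    set u := Ev internal Tc Fc lab x k root with hu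
    by_cases hui : u ∈ internal
    · rw [if_pos hui]
      by_cases hb : x (lab u)
      · rw [if_pos hb]
        refine (hreach x (Tc u) (hroot u hui).1).mpr ⟨u, hui, ih, Or.inl ⟨hb, rfl⟩⟩
      · rw [if_neg hb]
        refine (hreach x (Fc u) (hroot u hui).2).mpr
          ⟨u, hui, ih, Or.inr ⟨Bool.not_eq_true _ ▸ (by simpa using hb), rfl⟩⟩
    · rw [if_neg hui]; exact ih

lemma reach_to_seq (horder : ∀ u ∈ internal,
      (Tc u ∈ internal → ord (lab u) < ord (lab (Tc u))) ∧
      (Fc u ∈ internal → ord (lab u) < ord (lab (Fc u))))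
    (hreach : ∀ x v, v ≠ root →
      (reach x v = true ↔ ∃ u ∈ internal, reach x u = true ∧
        ((x (lab u) = true ∧ Tc u = v) ∨ (x (lab u) = false ∧ Fc u = v))))
    (x : ν → Bool) (u : V) (hr : reach x u = true) :
    ∃ k, Ev internal Tc Fc lab x k root = u := by
  have main : ∀ n u, u ∈ internal → ord (lab u) ≤ n → reach x u = true →
      ∃ k, Ev internal Tc Fc lab x k root = u := by
    intro n
    induction n with
    | zero =>
      intro u hu hord hr
      by_cases hne : u = root
      · exact ⟨0, hne.symm⟩
      · obtain ⟨u', hu', hru', hdis⟩ := (hreach x u hne).mp hr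
        exfalso
        rcases hdis with ⟨hb, hc⟩ | ⟨hb, hc⟩
        · have h2 := (horder u' hu').1 (hc ▸ hu); rw [hc] at h2; omega
        · have h2 := (horder u' hu').2 (hc ▸ hu); rw [hc] at h2; omega
    | succ n ih =>
      intro u hu hord hr
      by_cases hne : u = root
      · exact ⟨0, hne.symm⟩
      · obtain ⟨u', hu', hru', hdis⟩ := (hreach x u hne).mp hr
        have hordlt : ord (lab u') < ord (lab u) := by
          rcases hdis with ⟨hb, hc⟩ | ⟨hb, hc⟩
          · have h2 := (horder u' hu').1 (hc ▸ hu); rw [hc] at h2; exact h2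
          · have h2 := (horder u' hu').2 (hc ▸ hu); rw [hc] at h2; exact h2
        obtain ⟨k, hk⟩ := ih u' hu' (by omega) hru'
        refine ⟨k + 1, ?_⟩
        rw [Ev_succ' internal Tc Fc lab x k root, hk, if_pos hu']
        rcases hdis with ⟨hb, hc⟩ | ⟨hb, hc⟩
        · rw [hb]; simpa using hc
        · rw [hb]; simpa using hc
  by_cases hne : u = root
  · exact ⟨0, hne.symm⟩
  · obtain ⟨u', hu', hru', hdis⟩ := (hreach x u hne).mp hr
    obtain ⟨k, hk⟩ := main (ord (lab u')) u' hu' le_rfl hru'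
    refine ⟨k + 1, ?_⟩
    rw [Ev_succ' internal Tc Fc lab x k root, hk, if_pos hu']
    rcases hdis with ⟨hb, hc⟩ | ⟨hb, hc⟩
    · rw [hb]; simpa using hc
    · rw [hb]; simpa using hc

/-- on the walk, if position `l`'s value is internal, then all positions `m ≤ l` are internal
and the `ord`s strictly increase -/
lemma seq_ord_lt (horder : ∀ u ∈ internal,
      (Tc u ∈ internal → ord (lab u) < ord (lab (Tc u))) ∧
      (Fc u ∈ internal → ord (lab u) < ord (lab (Fc u))))
    (x : ν → Bool) (k l : ℕ) (hkl : k < l)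
    (hl : Ev internal Tc Fc lab x l root ∈ internal) :
    ord (lab (Ev internal Tc Fc lab x k root))
      < ord (lab (Ev internal Tc Fc lab x l root)) := by
  have hall : ∀ m, m ≤ l → Ev internal Tc Fc lab x m root ∈ internal := by
    intro m hm
    by_contra hout
    have : l = m + (l - m) := by omega
    rw [this, Ev_add, Ev_nonint _ _ _ _ _ _ _ hout] at hl
    exact hout hl
  exact Ev_chain_lt internal Tc Fc lab ord horder x root l hall k l hkl le_rfl

lemma reach_uniq_level (horder : ∀ u ∈ internal,
      (Tc u ∈ internal → ord (lab u) < ord (lab (Tc u))) ∧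
      (Fc u ∈ internal → ord (lab u) < ord (lab (Fc u))))
    (hreach : ∀ x v, v ≠ root →
      (reach x v = true ↔ ∃ u ∈ internal, reach x u = true ∧
        ((x (lab u) = true ∧ Tc u = v) ∨ (x (lab u) = false ∧ Fc u = v))))
    (x : ν → Bool) (u u' : V)
    (hr : reach x u = true) (hr' : reach x u' = true)
    (hu : u ∈ internal) (hu' : u' ∈ internal)
    (hord : ord (lab u) = ord (lab u')) : u = u' := by
  obtain ⟨k, hk⟩ := reach_to_seq internal Tc Fc lab ord root reach horder hreach x u hr
  obtain ⟨l, hl⟩ := reach_to_seq internal Tc Fc lab ord root reach horder hreach x u' hr'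
  rcases Nat.lt_trichotomy k l with h | h | h
  · have := seq_ord_lt internal Tc Fc lab ord root horder x k l h (hl ▸ hu')
    rw [hk, hl] at this; omega
  · rw [← hk, ← hl, h]
  · have := seq_ord_lt internal Tc Fc lab ord root horder x l k h (hk ▸ hu)
    rw [hk, hl] at this; omega

lemma parent_uniq (horder : ∀ u ∈ internal,
      (Tc u ∈ internal → ord (lab u) < ord (lab (Tc u))) ∧
      (Fc u ∈ internal → ord (lab u) < ord (lab (Fc u))))
    (hreach : ∀ x v, v ≠ root →
      (reach x v = true ↔ ∃ u ∈ internal, reach x u = true ∧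
        ((x (lab u) = true ∧ Tc u = v) ∨ (x (lab u) = false ∧ Fc u = v))))
    (x : ν → Bool) (u : V) (hu : u ∈ internal)
    (u1 u2 : V) (h1 : u1 ∈ internal) (h2 : u2 ∈ internal)
    (hr1 : reach x u1 = true) (hr2 : reach x u2 = true)
    (hc1 : (if x (lab u1) then Tc u1 else Fc u1) = u)
    (hc2 : (if x (lab u2) then Tc u2 else Fc u2) = u) : u1 = u2 := by
  obtain ⟨k, hk⟩ := reach_to_seq internal Tc Fc lab ord root reach horder hreach x u1 hr1
  obtain ⟨l, hl⟩ := reach_to_seq internal Tc Fc lab ord root reach horder hreach x u2 hr2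
  have hk1 : Ev internal Tc Fc lab x (k+1) root = u := by
    rw [Ev_succ' internal Tc Fc lab x k root, hk, if_pos h1]; exact hc1
  have hl1 : Ev internal Tc Fc lab x (l+1) root = u := by
    rw [Ev_succ' internal Tc Fc lab x l root, hl, if_pos h2]; exact hc2
  by_contra hne
  have hkl : k ≠ l := by
    intro h; rw [h, hl] at hk; exact hne hk.symm
  rcases Nat.lt_or_ge k l with h | h
  · have := seq_ord_lt internal Tc Fc lab ord root horder x (k+1) (l+1)
      (by omega) (hl1 ▸ hu)
    rw [hk1, hl1] at this; omega
  · have := seq_ord_lt internal Tc Fc lab ord root horder x (l+1) (k+1)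
      (by omega) (hk1 ▸ hu)
    rw [hk1, hl1] at this; omega

lemma acc_iff_EvN (horder : ∀ u ∈ internal,
      (Tc u ∈ internal → ord (lab u) < ord (lab (Tc u))) ∧
      (Fc u ∈ internal → ord (lab u) < ord (lab (Fc u))))
    (hroot : ∀ u ∈ internal, Tc u ≠ root ∧ Fc u ≠ root)
    (hreach_root : ∀ x, reach x root = true)
    (hreach : ∀ x v, v ≠ root →
      (reach x v = true ↔ ∃ u ∈ internal, reach x u = true ∧
        ((x (lab u) = true ∧ Tc u = v) ∨ (x (lab u) = false ∧ Fc u = v))))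
    (trueT : V) (htne : trueT ∉ internal) (x : ν → Bool) :
    (reach x trueT = true ↔
      Ev internal Tc Fc lab x (internal.card + 1) root = trueT) := by
  constructor
  · intro hr
    obtain ⟨k, hk⟩ := reach_to_seq internal Tc Fc lab ord root reach horder hreach x trueT hr
    rcases le_or_gt k (internal.card + 1) with h | h
    · have : internal.card + 1 = k + (internal.card + 1 - k) := by omega
      rw [this, Ev_add, hk, Ev_nonint _ _ _ _ _ _ _ htne]
    · have hout := Ev_N_nonint internal Tc Fc lab ord horder x root
      have : k = (internal.card + 1) + (k - (internal.card + 1)) := by omega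
      rw [this, Ev_add, Ev_nonint _ _ _ _ _ _ _ hout] at hk
      exact hk
  · intro h
    have := seq_reach internal Tc Fc lab root reach hroot hreach_root hreach x
      (internal.card + 1)
    rw [h] at this
    exact this

lemma acc_from (horder : ∀ u ∈ internal,
      (Tc u ∈ internal → ord (lab u) < ord (lab (Tc u))) ∧
      (Fc u ∈ internal → ord (lab u) < ord (lab (Fc u))))
    (hroot : ∀ u ∈ internal, Tc u ≠ root ∧ Fc u ≠ root)
    (hreach_root : ∀ x, reach x root = true)
    (hreach : ∀ x v, v ≠ root →
      (reach x v = true ↔ ∃ u ∈ internal, reach x u = true ∧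
        ((x (lab u) = true ∧ Tc u = v) ∨ (x (lab u) = false ∧ Fc u = v))))
    (trueT : V) (htne : trueT ∉ internal) (x : ν → Bool) (v : V)
    (hv : v ∈ internal) (hr : reach x v = true) :
    (reach x trueT = true ↔
      Ev internal Tc Fc lab x (internal.card + 1) v = trueT) := by
  obtain ⟨k, hk⟩ := reach_to_seq internal Tc Fc lab ord root reach horder hreach x v hr
  have hEv : Ev internal Tc Fc lab x (internal.card + 1) v
      = Ev internal Tc Fc lab x (internal.card + 1) root := by
    rw [← hk, ← Ev_add]
    have hout := Ev_N_nonint internal Tc Fc lab ord horder x root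
    have h1 : k + (internal.card + 1) = (internal.card + 1) + k := by omega
    rw [h1, Ev_add, Ev_nonint _ _ _ _ _ _ _ hout]
  rw [hEv]
  exact acc_iff_EvN internal Tc Fc lab ord root reach horder hroot hreach_root hreach
    trueT htne x

end Reach
section Dep

variable {ν V : Type} [Fintype ν] [DecidableEq ν] [Fintype V] [DecidableEq V]
variable (internal : Finset V) (Tc Fc : V → V) (lab : V → ν) (ord : ν → ℕ)
variable (root : V) (reach : (ν → Bool) → V → Bool)

lemma reach_depends
    (horder : ∀ u ∈ internal,
      (Tc u ∈ internal → ord (lab u) < ord (lab (Tc u))) ∧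
      (Fc u ∈ internal → ord (lab u) < ord (lab (Fc u))))
    (hreach_root : ∀ x, reach x root = true)
    (hreach : ∀ x v, v ≠ root →
      (reach x v = true ↔ ∃ u ∈ internal, reach x u = true ∧
        ((x (lab u) = true ∧ Tc u = v) ∨ (x (lab u) = false ∧ Fc u = v)))) :
    ∀ n (x y : ν → Bool) (u : V), (u = root ∨ u ∈ internal) → ord (lab u) ≤ n →
      (∀ w, ord w < ord (lab u) → x w = y w) → reach x u = reach y u := by
  intro n
  induction n using Nat.strong_induction_on with
  | _ n IH =>
  intro x y u hu hord hagree
  by_cases hur : u = root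
  · subst hur; rw [hreach_root x, hreach_root y]
  · have hui : u ∈ internal := hu.resolve_left hur
    have main : ∀ x' y' : ν → Bool, (∀ w, ord w < ord (lab u) → x' w = y' w) →
        reach x' u = true → reach y' u = true := by
      intro x' y' hag hr
      obtain ⟨u', hu'i, hru', hdis⟩ := (hreach x' u hur).mp hr
      have hordlt : ord (lab u') < ord (lab u) := by
        rcases hdis with ⟨hb, hc⟩ | ⟨hb, hc⟩
        · have h2 := (horder u' hu'i).1 (hc ▸ hui); rw [hc] at h2; exact h2
        · have h2 := (horder u' hu'i).2 (hc ▸ hui); rw [hc] at h2; exact h2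
      have hxy : x' (lab u') = y' (lab u') := hag _ hordlt
      have hr' : reach y' u' = true := by
        rw [← IH (ord (lab u')) (by omega) x' y' u' (Or.inr hu'i) le_rfl
          (fun w hw => hag w (by omega))]
        exact hru'
      refine (hreach y' u hur).mpr ⟨u', hu'i, hr', ?_⟩
      rw [← hxy]
      exact hdis
    cases hx : reach x u <;> cases hy : reach y u
    · rfl
    · exact absurd (main y x (fun w hw => (hagree w hw).symm) hy) (by simp [hx])
    · exact absurd (main x y hagree hx) (by simp [hy])
    · rfl

lemma Ev_depends
    (horder : ∀ u ∈ internal,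
      (Tc u ∈ internal → ord (lab u) < ord (lab (Tc u))) ∧
      (Fc u ∈ internal → ord (lab u) < ord (lab (Fc u)))) :
    ∀ n (x y : ν → Bool) (v : V), v ∈ internal →
      (∀ w, ord (lab v) ≤ ord w → x w = y w) →
      Ev internal Tc Fc lab x n v = Ev internal Tc Fc lab y n v := by
  intro n
  induction n with
  | zero => intro x y v _ _; rfl
  | succ n ih =>
    intro x y v hv hag
    show (if v ∈ internal then Ev internal Tc Fc lab x n _ else v)
      = (if v ∈ internal then Ev internal Tc Fc lab y n _ else v)
    rw [if_pos hv, if_pos hv]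
    have hb : x (lab v) = y (lab v) := hag _ le_rfl
    rw [hb]
    set c := if y (lab v) then Tc v else Fc v with hc
    have hordc : c ∈ internal → ord (lab v) < ord (lab c) := by
      intro hci
      by_cases hyb : y (lab v)
      · rw [hc]; rw [if_pos hyb]; exact (horder v hv).1 (by rw [hc, if_pos hyb] at hci; exact hci)
      · rw [hc]; rw [if_neg hyb]; exact (horder v hv).2 (by rw [hc, if_neg hyb] at hci; exact hci)
    by_cases hci : c ∈ internal
    · exact ih x y c hci (fun w hw => hag w (by have := hordc hci; omega))
    · rw [Ev_nonint _ _ _ _ _ _ _ hci, Ev_nonint _ _ _ _ _ _ _ hci]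

end Dep

/-- **COP decomposition at a variable level and its derivative.** In an ordered BDD
(same DAG setup and message recurrences as before, with terminals `trueT`, `falseT`,
bottom-up messages `m_bu` and top-down messages `m_td`), fix a variable `i` such that
every root-to-terminal path crosses a node labeled `i`. Then the circuit-output
probability (the probability that the random walk reaches the `True` terminal)
satisfies `COP = Σ_{v : lab v = i} m_td[v]·(p_i·m_bu[v.T] + (1-p_i)·m_bu[v.F])`, and
consequently its partial derivative with respect to `p_i` is
`∂COP/∂p_i = Σ_{v : lab v = i} m_td[v]·(m_bu[v.T] - m_bu[v.F])`. -/
theorem cop_decomposition_and_derivative {ν V : Type}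
    [Fintype ν] [DecidableEq ν] [Fintype V] [DecidableEq V]
    (root trueT falseT : V) (internal : Finset V) (Tc Fc : V → V) (lab : V → ν)
    (p : ν → ℝ) (hp : ∀ v, p v ∈ Set.Icc (0 : ℝ) 1)
    (ord : ν → ℕ)
    (horder : ∀ u ∈ internal,
      (Tc u ∈ internal → ord (lab u) < ord (lab (Tc u))) ∧
      (Fc u ∈ internal → ord (lab u) < ord (lab (Fc u))))
    (hroot : ∀ u ∈ internal, Tc u ≠ root ∧ Fc u ≠ root)
    (hterm : ∀ v : V, v ∉ internal → v = trueT ∨ v = falseT)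
    (htne : trueT ∉ internal) (hfne : falseT ∉ internal) (htf : trueT ≠ falseT)
    (reach : (ν → Bool) → V → Bool)
    (hreach_root : ∀ x, reach x root = true)
    (hreach : ∀ x v, v ≠ root →
      (reach x v = true ↔ ∃ u ∈ internal, reach x u = true ∧
        ((x (lab u) = true ∧ Tc u = v) ∨ (x (lab u) = false ∧ Fc u = v))))
    (mtd : V → ℝ)
    (hmtd_root : mtd root = 1)
    (hmtd : ∀ v, v ≠ root →
      mtd v = (∑ u ∈ internal.filter fun u => Tc u = v, p (lab u) * mtd u) +
              ∑ u ∈ internal.filter fun u => Fc u = v, (1 - p (lab u)) * mtd u)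
    (mbu : V → ℝ)
    (hmbu_t : mbu trueT = 1) (hmbu_f : mbu falseT = 0)
    (hmbu : ∀ v ∈ internal,
      mbu v = p (lab v) * mbu (Tc v) + (1 - p (lab v)) * mbu (Fc v))
    (i : ν)
    (hhit : ∀ x : ν → Bool, ∃ v ∈ internal, lab v = i ∧ reach x v = true) :
    (∑ x : ν → Bool,
        (∏ w, if x w then p w else 1 - p w) * (if reach x trueT then (1 : ℝ) else 0))
      = (∑ v ∈ internal.filter fun v => lab v = i,
          mtd v * (p i * mbu (Tc v) + (1 - p i) * mbu (Fc v))) ∧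
    HasDerivAt (fun t : ℝ => ∑ x : ν → Bool,
        (∏ w, if x w then Function.update p i t w else 1 - Function.update p i t w) *
          (if reach x trueT then (1 : ℝ) else 0))
      (∑ v ∈ internal.filter fun v => lab v = i, mtd v * (mbu (Tc v) - mbu (Fc v)))
      (p i) := by
  classical
  -- base weight
  have hq0 : ∀ w, (fun w b => if b then p w else 1 - p w) w true
      + (fun w b => if b then p w else 1 - p w) w false = 1 := by
    intro w; show p w + (1 - p w) = 1; ring
  -- χ-product splitting of and-indicators
  have hchi : ∀ (P Q : Prop) [Decidable P] [Decidable Q],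
      (if P ∧ Q then (1:ℝ) else 0) = (if P then (1:ℝ) else 0) * (if Q then (1:ℝ) else 0) := by
    intro P Q _ _
    by_cases h1 : P <;> by_cases h2 : Q <;> simp [h1, h2]
  ---------------------------------------------------------------------------
  -- Top-down message identity
  ---------------------------------------------------------------------------
  have TD : ∀ n, ∀ u : V, (u = root ∨ u ∈ internal) → ord (lab u) ≤ n →
      (∑ x : ν → Bool, (∏ w, if x w then p w else 1 - p w)
        * (if reach x u then (1:ℝ) else 0)) = mtd u := by
    intro n
    induction n using Nat.strong_induction_on with
    | _ n IH =>
    intro u hu hord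
    by_cases hur : u = root
    · have hru : ∀ x : ν → Bool, reach x u = true := fun x => by
        rw [hur]; exact hreach_root x
      have e1 : ∀ x : ν → Bool,
          (∏ w, if x w then p w else 1 - p w) * (if reach x u then (1:ℝ) else 0)
          = ∏ w, (fun w b => if b then p w else 1 - p w) w (x w) := by
        intro x; rw [hru x]; simp
      rw [Finset.sum_congr rfl (fun x _ => e1 x), sum_prod_one (fun w b => if b then p w else 1 - p w) hq0, hur, hmtd_root]
    · have hui : u ∈ internal := hu.resolve_left hur
      -- decomposition of the reach indicator over parents
      have hdec : ∀ x : ν → Bool, (if reach x u then (1:ℝ) else 0) =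
          (∑ u' ∈ internal.filter (fun u' => Tc u' = u),
            (if reach x u' = true ∧ x (lab u') = true then (1:ℝ) else 0))
        + (∑ u' ∈ internal.filter (fun u' => Fc u' = u),
            (if reach x u' = true ∧ x (lab u') = false then (1:ℝ) else 0)) := by
        intro x
        by_cases hr : reach x u = true
        · rw [if_pos hr]
          obtain ⟨u0, hu0, hru0, hdis⟩ := (hreach x u hur).mp hr
          rcases hdis with ⟨hb, hc⟩ | ⟨hb, hc⟩
          · have hfT : ∑ u' ∈ internal.filter (fun u' => Tc u' = u),
                (if reach x u' = true ∧ x (lab u') = true then (1:ℝ) else 0) = 1 := by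
              rw [Finset.sum_eq_single_of_mem u0
                  (show u0 ∈ internal.filter (fun u' => Tc u' = u) from
                    Finset.mem_filter.mpr ⟨hu0, hc⟩)]
              · rw [if_pos ⟨hru0, hb⟩]
              · intro u' hu' hne'
                rw [if_neg]
                rintro ⟨hru', hb'⟩
                obtain ⟨hu'i, hu'c⟩ := Finset.mem_filter.mp hu'
                exact hne' (parent_uniq internal Tc Fc lab ord root reach horder hreach
                  x u hui u' u0 hu'i hu0 hru' hru0
                  (by simp [hb', hu'c]) (by simp [hb, hc]))
            have hfF : ∑ u' ∈ internal.filter (fun u' => Fc u' = u),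
                (if reach x u' = true ∧ x (lab u') = false then (1:ℝ) else 0) = 0 := by
              refine Finset.sum_eq_zero (fun u' hu' => ?_)
              rw [if_neg]
              rintro ⟨hru', hb'⟩
              obtain ⟨hu'i, hu'c⟩ := Finset.mem_filter.mp hu'
              have := parent_uniq internal Tc Fc lab ord root reach horder hreach
                x u hui u' u0 hu'i hu0 hru' hru0
                (by simp [hb', hu'c]) (by simp [hb, hc])
              rw [this, hb] at hb'; exact absurd hb' (by simp)
            simp [hfT, hfF]
          · have hfF : ∑ u' ∈ internal.filter (fun u' => Fc u' = u),
                (if reach x u' = true ∧ x (lab u') = false then (1:ℝ) else 0) = 1 := by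
              rw [Finset.sum_eq_single_of_mem u0
                  (show u0 ∈ internal.filter (fun u' => Fc u' = u) from
                    Finset.mem_filter.mpr ⟨hu0, hc⟩)]
              · rw [if_pos ⟨hru0, hb⟩]
              · intro u' hu' hne'
                rw [if_neg]
                rintro ⟨hru', hb'⟩
                obtain ⟨hu'i, hu'c⟩ := Finset.mem_filter.mp hu'
                exact hne' (parent_uniq internal Tc Fc lab ord root reach horder hreach
                  x u hui u' u0 hu'i hu0 hru' hru0
                  (by simp [hb', hu'c]) (by simp [hb, hc]))
            have hfT : ∑ u' ∈ internal.filter (fun u' => Tc u' = u),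
                (if reach x u' = true ∧ x (lab u') = true then (1:ℝ) else 0) = 0 := by
              refine Finset.sum_eq_zero (fun u' hu' => ?_)
              rw [if_neg]
              rintro ⟨hru', hb'⟩
              obtain ⟨hu'i, hu'c⟩ := Finset.mem_filter.mp hu'
              have := parent_uniq internal Tc Fc lab ord root reach horder hreach
                x u hui u' u0 hu'i hu0 hru' hru0
                (by simp [hb', hu'c]) (by simp [hb, hc])
              rw [this, hb] at hb'; exact absurd hb' (by simp)
            simp [hfT, hfF]
        · rw [if_neg hr]
          have hfT : ∑ u' ∈ internal.filter (fun u' => Tc u' = u),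
              (if reach x u' = true ∧ x (lab u') = true then (1:ℝ) else 0) = 0 := by
            refine Finset.sum_eq_zero (fun u' hu' => ?_)
            rw [if_neg]
            rintro ⟨hru', hb'⟩
            obtain ⟨hu'i, hu'c⟩ := Finset.mem_filter.mp hu'
            exact hr ((hreach x u hur).mpr ⟨u', hu'i, hru', Or.inl ⟨hb', hu'c⟩⟩)
          have hfF : ∑ u' ∈ internal.filter (fun u' => Fc u' = u),
              (if reach x u' = true ∧ x (lab u') = false then (1:ℝ) else 0) = 0 := by
            refine Finset.sum_eq_zero (fun u' hu' => ?_)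
            rw [if_neg]
            rintro ⟨hru', hb'⟩
            obtain ⟨hu'i, hu'c⟩ := Finset.mem_filter.mp hu'
            exact hr ((hreach x u hur).mpr ⟨u', hu'i, hru', Or.inr ⟨hb', hu'c⟩⟩)
          simp [hfT, hfF]
      -- per-parent sums
      have hTterm : ∀ u' ∈ internal.filter (fun u' => Tc u' = u),
          (∑ x : ν → Bool, (∏ w, if x w then p w else 1 - p w)
            * (if reach x u' = true ∧ x (lab u') = true then (1:ℝ) else 0))
          = p (lab u') * mtd u' := by
        intro u' hu'
        obtain ⟨hu'i, hcu'⟩ := Finset.mem_filter.mp hu'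
        have hords : ord (lab u') < ord (lab u) := by
          have h2 := (horder u' hu'i).1 (hcu' ▸ hui); rw [hcu'] at h2; exact h2
        have estep : ∀ x : ν → Bool,
            (∏ w, if x w then p w else 1 - p w)
              * (if reach x u' = true ∧ x (lab u') = true then (1:ℝ) else 0)
            = (∏ w, (fun w b => if b then p w else 1 - p w) w (x w)) *
              ((fun x : ν → Bool => if reach x u' then (1:ℝ) else 0) x *
               (fun x : ν → Bool => if x (lab u') then (1:ℝ) else 0) x) := by
          intro x
          show _ = _ * ((if reach x u' then (1:ℝ) else 0) * (if x (lab u') then (1:ℝ) else 0))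
          rw [← hchi]
        have hf : ∀ x y : ν → Bool, (∀ w ∈ {w | ord w < ord (lab u')}, x w = y w) →
            (fun x : ν → Bool => if reach x u' then (1:ℝ) else 0) x
            = (fun x : ν → Bool => if reach x u' then (1:ℝ) else 0) y := by
          intro x y hxy
          show (if reach x u' then (1:ℝ) else 0) = (if reach y u' then (1:ℝ) else 0)
          rw [reach_depends internal Tc Fc lab ord root reach horder hreach_root hreach
            (ord (lab u')) x y u' (Or.inr hu'i) le_rfl (fun w hw => hxy w hw)]
        have hg : ∀ x y : ν → Bool, (∀ w ∉ {w | ord w < ord (lab u')}, x w = y w) →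
            (fun x : ν → Bool => if x (lab u') then (1:ℝ) else 0) x
            = (fun x : ν → Bool => if x (lab u') then (1:ℝ) else 0) y := by
          intro x y hxy
          show (if x (lab u') then (1:ℝ) else 0) = (if y (lab u') then (1:ℝ) else 0)
          rw [hxy (lab u') (by simp)]
        have efact := fact_indep (fun w b => if b then p w else 1 - p w) hq0
          {w | ord w < ord (lab u')}
          (fun x : ν → Bool => if reach x u' then (1:ℝ) else 0)
          (fun x : ν → Bool => if x (lab u') then (1:ℝ) else 0) hf hg
        have hA : (∑ x : ν → Bool, (∏ w, (fun w b => if b then p w else 1 - p w) w (x w))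
            * (fun x : ν → Bool => if reach x u' then (1:ℝ) else 0) x) = mtd u' :=
          IH (ord (lab u')) (by omega) u' (Or.inr hu'i) le_rfl
        have hB : (∑ x : ν → Bool, (∏ w, (fun w b => if b then p w else 1 - p w) w (x w))
            * (fun x : ν → Bool => if x (lab u') then (1:ℝ) else 0) x) = p (lab u') := by
          have := exp_coord (fun w b => if b then p w else 1 - p w) hq0 (lab u') 1 0
          rw [this]
          show p (lab u') * 1 + (1 - p (lab u')) * 0 = p (lab u')
          ring
        rw [Finset.sum_congr rfl (fun x _ => estep x), efact, hA, hB, mul_comm]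
      have hFterm : ∀ u' ∈ internal.filter (fun u' => Fc u' = u),
          (∑ x : ν → Bool, (∏ w, if x w then p w else 1 - p w)
            * (if reach x u' = true ∧ x (lab u') = false then (1:ℝ) else 0))
          = (1 - p (lab u')) * mtd u' := by
        intro u' hu'
        obtain ⟨hu'i, hcu'⟩ := Finset.mem_filter.mp hu'
        have hords : ord (lab u') < ord (lab u) := by
          have h2 := (horder u' hu'i).2 (hcu' ▸ hui); rw [hcu'] at h2; exact h2
        have estep : ∀ x : ν → Bool,
            (∏ w, if x w then p w else 1 - p w)
              * (if reach x u' = true ∧ x (lab u') = false then (1:ℝ) else 0)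
            = (∏ w, (fun w b => if b then p w else 1 - p w) w (x w)) *
              ((fun x : ν → Bool => if reach x u' then (1:ℝ) else 0) x *
               (fun x : ν → Bool => if x (lab u') then (0:ℝ) else 1) x) := by
          intro x
          show _ * (if reach x u' = true ∧ x (lab u') = false then (1:ℝ) else 0)
            = _ * ((if reach x u' then (1:ℝ) else 0) * (if x (lab u') then (0:ℝ) else 1))
          congr 1
          by_cases h1 : reach x u' = true <;> by_cases h2 : x (lab u') = true <;>
            simp [h1, h2]
        have hf : ∀ x y : ν → Bool, (∀ w ∈ {w | ord w < ord (lab u')}, x w = y w) →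
            (fun x : ν → Bool => if reach x u' then (1:ℝ) else 0) x
            = (fun x : ν → Bool => if reach x u' then (1:ℝ) else 0) y := by
          intro x y hxy
          show (if reach x u' then (1:ℝ) else 0) = (if reach y u' then (1:ℝ) else 0)
          rw [reach_depends internal Tc Fc lab ord root reach horder hreach_root hreach
            (ord (lab u')) x y u' (Or.inr hu'i) le_rfl (fun w hw => hxy w hw)]
        have hg : ∀ x y : ν → Bool, (∀ w ∉ {w | ord w < ord (lab u')}, x w = y w) →
            (fun x : ν → Bool => if x (lab u') then (0:ℝ) else 1) x
            = (fun x : ν → Bool => if x (lab u') then (0:ℝ) else 1) y := by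
          intro x y hxy
          show (if x (lab u') then (0:ℝ) else 1) = (if y (lab u') then (0:ℝ) else 1)
          rw [hxy (lab u') (by simp)]
        have efact := fact_indep (fun w b => if b then p w else 1 - p w) hq0
          {w | ord w < ord (lab u')}
          (fun x : ν → Bool => if reach x u' then (1:ℝ) else 0)
          (fun x : ν → Bool => if x (lab u') then (0:ℝ) else 1) hf hg
        have hA : (∑ x : ν → Bool, (∏ w, (fun w b => if b then p w else 1 - p w) w (x w))
            * (fun x : ν → Bool => if reach x u' then (1:ℝ) else 0) x) = mtd u' :=
          IH (ord (lab u')) (by omega) u' (Or.inr hu'i) le_rfl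
        have hB : (∑ x : ν → Bool, (∏ w, (fun w b => if b then p w else 1 - p w) w (x w))
            * (fun x : ν → Bool => if x (lab u') then (0:ℝ) else 1) x) = 1 - p (lab u') := by
          have := exp_coord (fun w b => if b then p w else 1 - p w) hq0 (lab u') 0 1
          rw [this]
          show p (lab u') * 0 + (1 - p (lab u')) * 1 = 1 - p (lab u')
          ring
        rw [Finset.sum_congr rfl (fun x _ => estep x), efact, hA, hB, mul_comm]
      -- combine
      have e1 : (∑ x : ν → Bool, (∏ w, if x w then p w else 1 - p w)
            * (if reach x u then (1:ℝ) else 0))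
          = ∑ x : ν → Bool,
            ((∑ u' ∈ internal.filter (fun u' => Tc u' = u),
              (∏ w, if x w then p w else 1 - p w)
                * (if reach x u' = true ∧ x (lab u') = true then (1:ℝ) else 0))
            + (∑ u' ∈ internal.filter (fun u' => Fc u' = u),
              (∏ w, if x w then p w else 1 - p w)
                * (if reach x u' = true ∧ x (lab u') = false then (1:ℝ) else 0))) := by
        refine Finset.sum_congr rfl (fun x _ => ?_)
        rw [hdec x, mul_add, Finset.mul_sum, Finset.mul_sum]
      rw [e1, Finset.sum_add_distrib,
        Finset.sum_comm.trans (Finset.sum_congr rfl hTterm),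
        Finset.sum_comm.trans (Finset.sum_congr rfl hFterm), ← hmtd u hur]
    ---------------------------------------------------------------------------
  -- Bottom-up message identity
  ---------------------------------------------------------------------------
  have BUterm : ∀ u : V, u = trueT ∨ u = falseT →
      (∑ x : ν → Bool, (∏ w, if x w then p w else 1 - p w)
        * (if Ev internal Tc Fc lab x (internal.card + 1) u = trueT then (1:ℝ) else 0))
      = mbu u := by
    intro u hu
    rcases hu with h | h <;> rw [h]
    · have e1 : ∀ x : ν → Bool,
          (∏ w, if x w then p w else 1 - p w)
            * (if Ev internal Tc Fc lab x (internal.card + 1) trueT = trueT then (1:ℝ) else 0)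
          = ∏ w, (fun w b => if b then p w else 1 - p w) w (x w) := by
        intro x
        rw [Ev_nonint internal Tc Fc lab x (internal.card + 1) trueT htne]
        simp
      rw [Finset.sum_congr rfl (fun x _ => e1 x),
        sum_prod_one (fun w b => if b then p w else 1 - p w) hq0, hmbu_t]
    · have e1 : ∀ x : ν → Bool,
          (∏ w, if x w then p w else 1 - p w)
            * (if Ev internal Tc Fc lab x (internal.card + 1) falseT = trueT then (1:ℝ) else 0)
          = 0 := by
        intro x
        rw [Ev_nonint internal Tc Fc lab x (internal.card + 1) falseT hfne,
          if_neg (fun h => htf h.symm), mul_zero]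
      rw [Finset.sum_congr rfl (fun x _ => e1 x), Finset.sum_const_zero, hmbu_f]
  have BU : ∀ n, ∀ u : V,
      (u ∈ internal → internal.sup (fun v => ord (lab v)) + 1 - ord (lab u) ≤ n) →
      (∑ x : ν → Bool, (∏ w, if x w then p w else 1 - p w)
        * (if Ev internal Tc Fc lab x (internal.card + 1) u = trueT then (1:ℝ) else 0))
      = mbu u := by
    intro n
    induction n with
    | zero =>
      intro u hn
      by_cases hui : u ∈ internal
      · exfalso
        have h1 : ord (lab u) ≤ internal.sup (fun v => ord (lab v)) :=
          Finset.le_sup (f := fun v => ord (lab v)) hui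
        have h2 := hn hui
        omega
      · exact BUterm u (hterm u hui)
    | succ n IHn =>
      intro u hn
      by_cases hui : u ∈ internal
      swap
      · exact BUterm u (hterm u hui)
      · have hordu : ord (lab u) ≤ internal.sup (fun v => ord (lab v)) :=
          Finset.le_sup (f := fun v => ord (lab v)) hui
        have estep : ∀ x : ν → Bool,
            (∏ w, if x w then p w else 1 - p w)
              * (if Ev internal Tc Fc lab x (internal.card + 1) u = trueT then (1:ℝ) else 0)
            = (∏ w, if x w then p w else 1 - p w)
                * ((if x (lab u) then (1:ℝ) else 0)
                  * (if Ev internal Tc Fc lab x (internal.card + 1) (Tc u) = trueT then (1:ℝ) else 0))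
            + (∏ w, if x w then p w else 1 - p w)
                * ((if x (lab u) then (0:ℝ) else 1)
                  * (if Ev internal Tc Fc lab x (internal.card + 1) (Fc u) = trueT then (1:ℝ) else 0)) := by
          intro x
          rw [Ev_rec_N internal Tc Fc lab ord horder x u hui]
          by_cases hb : x (lab u) = true
          · simp [hb]
          · have hb' : x (lab u) = false := by simpa using hb
            simp [hb']
        rw [Finset.sum_congr rfl (fun x _ => estep x), Finset.sum_add_distrib]
        -- true branch
        have hbuT : (∑ x : ν → Bool, (∏ w, if x w then p w else 1 - p w)
            * (if Ev internal Tc Fc lab x (internal.card + 1) (Tc u) = trueT then (1:ℝ) else 0))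
            = mbu (Tc u) := by
          by_cases hTc : Tc u ∈ internal
          · refine IHn (Tc u) (fun _ => ?_)
            have h1 := (horder u hui).1 hTc
            have h2 : ord (lab (Tc u)) ≤ internal.sup (fun v => ord (lab v)) :=
              Finset.le_sup (f := fun v => ord (lab v)) hTc
            have h3 := hn hui
            omega
          · exact BUterm (Tc u) (hterm _ hTc)
        have hbuF : (∑ x : ν → Bool, (∏ w, if x w then p w else 1 - p w)
            * (if Ev internal Tc Fc lab x (internal.card + 1) (Fc u) = trueT then (1:ℝ) else 0))
            = mbu (Fc u) := by
          by_cases hFc : Fc u ∈ internal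
          · refine IHn (Fc u) (fun _ => ?_)
            have h1 := (horder u hui).2 hFc
            have h2 : ord (lab (Fc u)) ≤ internal.sup (fun v => ord (lab v)) :=
              Finset.le_sup (f := fun v => ord (lab v)) hFc
            have h3 := hn hui
            omega
          · exact BUterm (Fc u) (hterm _ hFc)
        have hT : (∑ x : ν → Bool, (∏ w, if x w then p w else 1 - p w)
              * ((if x (lab u) then (1:ℝ) else 0)
                * (if Ev internal Tc Fc lab x (internal.card + 1) (Tc u) = trueT then (1:ℝ) else 0)))
            = p (lab u) * mbu (Tc u) := by
          have hf : ∀ x y : ν → Bool, (∀ w ∈ {w | ord w ≤ ord (lab u)}, x w = y w) →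
              (fun x : ν → Bool => if x (lab u) then (1:ℝ) else 0) x
              = (fun x : ν → Bool => if x (lab u) then (1:ℝ) else 0) y := by
            intro x y hxy
            show (if x (lab u) then (1:ℝ) else 0) = (if y (lab u) then (1:ℝ) else 0)
            rw [hxy (lab u) (by simp)]
          have hg : ∀ x y : ν → Bool, (∀ w ∉ {w | ord w ≤ ord (lab u)}, x w = y w) →
              (fun x : ν → Bool =>
                if Ev internal Tc Fc lab x (internal.card + 1) (Tc u) = trueT then (1:ℝ) else 0) x
              = (fun x : ν → Bool =>
                if Ev internal Tc Fc lab x (internal.card + 1) (Tc u) = trueT then (1:ℝ) else 0) y := by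
            intro x y hxy
            show (if Ev internal Tc Fc lab x (internal.card + 1) (Tc u) = trueT then (1:ℝ) else 0)
              = (if Ev internal Tc Fc lab y (internal.card + 1) (Tc u) = trueT then (1:ℝ) else 0)
            by_cases hTc : Tc u ∈ internal
            · rw [Ev_depends internal Tc Fc lab ord horder (internal.card + 1) x y (Tc u) hTc
                (fun w hw => hxy w (by
                  have h1 := (horder u hui).1 hTc
                  simp only [Set.mem_setOf_eq]
                  omega))]
            · rw [Ev_nonint internal Tc Fc lab x (internal.card + 1) (Tc u) hTc,
                Ev_nonint internal Tc Fc lab y (internal.card + 1) (Tc u) hTc]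
          calc (∑ x : ν → Bool, (∏ w, if x w then p w else 1 - p w)
              * ((if x (lab u) then (1:ℝ) else 0)
                * (if Ev internal Tc Fc lab x (internal.card + 1) (Tc u) = trueT then (1:ℝ) else 0)))
              = (∑ x : ν → Bool, (∏ w, if x w then p w else 1 - p w)
                  * (if x (lab u) then (1:ℝ) else 0))
                * (∑ x : ν → Bool, (∏ w, if x w then p w else 1 - p w)
                  * (if Ev internal Tc Fc lab x (internal.card + 1) (Tc u) = trueT then (1:ℝ) else 0)) :=
              fact_indep (fun w b => if b then p w else 1 - p w) hq0
                {w | ord w ≤ ord (lab u)}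
                (fun x : ν → Bool => if x (lab u) then (1:ℝ) else 0)
                (fun x : ν → Bool =>
                  if Ev internal Tc Fc lab x (internal.card + 1) (Tc u) = trueT then (1:ℝ) else 0)
                hf hg
            _ = p (lab u) * mbu (Tc u) := by
              rw [hbuT]
              congr 1
              calc (∑ x : ν → Bool, (∏ w, if x w then p w else 1 - p w)
                  * (if x (lab u) then (1:ℝ) else 0))
                  = p (lab u) * 1 + (1 - p (lab u)) * 0 :=
                    exp_coord (fun w b => if b then p w else 1 - p w) hq0 (lab u) 1 0
                _ = p (lab u) := by ring
        have hF : (∑ x : ν → Bool, (∏ w, if x w then p w else 1 - p w)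
              * ((if x (lab u) then (0:ℝ) else 1)
                * (if Ev internal Tc Fc lab x (internal.card + 1) (Fc u) = trueT then (1:ℝ) else 0)))
            = (1 - p (lab u)) * mbu (Fc u) := by
          have hf : ∀ x y : ν → Bool, (∀ w ∈ {w | ord w ≤ ord (lab u)}, x w = y w) →
              (fun x : ν → Bool => if x (lab u) then (0:ℝ) else 1) x
              = (fun x : ν → Bool => if x (lab u) then (0:ℝ) else 1) y := by
            intro x y hxy
            show (if x (lab u) then (0:ℝ) else 1) = (if y (lab u) then (0:ℝ) else 1)
            rw [hxy (lab u) (by simp)]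
          have hg : ∀ x y : ν → Bool, (∀ w ∉ {w | ord w ≤ ord (lab u)}, x w = y w) →
              (fun x : ν → Bool =>
                if Ev internal Tc Fc lab x (internal.card + 1) (Fc u) = trueT then (1:ℝ) else 0) x
              = (fun x : ν → Bool =>
                if Ev internal Tc Fc lab x (internal.card + 1) (Fc u) = trueT then (1:ℝ) else 0) y := by
            intro x y hxy
            show (if Ev internal Tc Fc lab x (internal.card + 1) (Fc u) = trueT then (1:ℝ) else 0)
              = (if Ev internal Tc Fc lab y (internal.card + 1) (Fc u) = trueT then (1:ℝ) else 0)
            by_cases hFc : Fc u ∈ internal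
            · rw [Ev_depends internal Tc Fc lab ord horder (internal.card + 1) x y (Fc u) hFc
                (fun w hw => hxy w (by
                  have h1 := (horder u hui).2 hFc
                  simp only [Set.mem_setOf_eq]
                  omega))]
            · rw [Ev_nonint internal Tc Fc lab x (internal.card + 1) (Fc u) hFc,
                Ev_nonint internal Tc Fc lab y (internal.card + 1) (Fc u) hFc]
          calc (∑ x : ν → Bool, (∏ w, if x w then p w else 1 - p w)
              * ((if x (lab u) then (0:ℝ) else 1)
                * (if Ev internal Tc Fc lab x (internal.card + 1) (Fc u) = trueT then (1:ℝ) else 0)))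
              = (∑ x : ν → Bool, (∏ w, if x w then p w else 1 - p w)
                  * (if x (lab u) then (0:ℝ) else 1))
                * (∑ x : ν → Bool, (∏ w, if x w then p w else 1 - p w)
                  * (if Ev internal Tc Fc lab x (internal.card + 1) (Fc u) = trueT then (1:ℝ) else 0)) :=
              fact_indep (fun w b => if b then p w else 1 - p w) hq0
                {w | ord w ≤ ord (lab u)}
                (fun x : ν → Bool => if x (lab u) then (0:ℝ) else 1)
                (fun x : ν → Bool =>
                  if Ev internal Tc Fc lab x (internal.card + 1) (Fc u) = trueT then (1:ℝ) else 0)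
                hf hg
            _ = (1 - p (lab u)) * mbu (Fc u) := by
              rw [hbuF]
              congr 1
              calc (∑ x : ν → Bool, (∏ w, if x w then p w else 1 - p w)
                  * (if x (lab u) then (0:ℝ) else 1))
                  = p (lab u) * 0 + (1 - p (lab u)) * 1 :=
                    exp_coord (fun w b => if b then p w else 1 - p w) hq0 (lab u) 0 1
                _ = 1 - p (lab u) := by ring
        rw [hT, hF]
        exact (hmbu u hui).symm
  have BUall : ∀ u : V,
      (∑ x : ν → Bool, (∏ w, if x w then p w else 1 - p w)
        * (if Ev internal Tc Fc lab x (internal.card + 1) u = trueT then (1:ℝ) else 0))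
      = mbu u :=
    fun u => BU (internal.sup (fun v => ord (lab v)) + 1) u (fun _ => Nat.sub_le _ _)
  ---------------------------------------------------------------------------
  -- level-i partition of unity
  ---------------------------------------------------------------------------
  have hpart : ∀ x : ν → Bool,
      (∑ v ∈ internal.filter (fun v => lab v = i), (if reach x v then (1:ℝ) else 0)) = 1 := by
    intro x
    obtain ⟨v0, hv0i, hv0lab, hv0r⟩ := hhit x
    rw [Finset.sum_eq_single_of_mem v0
      (show v0 ∈ internal.filter (fun v => lab v = i) from
        Finset.mem_filter.mpr ⟨hv0i, hv0lab⟩)]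
    · rw [if_pos hv0r]
    · intro v' hv' hne
      rw [if_neg]
      intro hrv'
      obtain ⟨hv'i, hv'lab⟩ := Finset.mem_filter.mp hv'
      exact hne (reach_uniq_level internal Tc Fc lab ord root reach horder hreach
        x v' v0 hrv' hv0r hv'i hv0i (by rw [hv'lab, hv0lab]))
    ---------------------------------------------------------------------------
  -- the master identity, for an arbitrary value t of the i-th probability
  ---------------------------------------------------------------------------
  have key : ∀ t : ℝ,
      (∑ x : ν → Bool,
        (∏ w, if x w then Function.update p i t w else 1 - Function.update p i t w) *
          (if reach x trueT then (1 : ℝ) else 0))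
      = ∑ v ∈ internal.filter (fun v => lab v = i),
          mtd v * (t * mbu (Tc v) + (1 - t) * mbu (Fc v)) := by
    intro t
    have hqt : ∀ w,
        (fun w b => if b then Function.update p i t w else 1 - Function.update p i t w) w true
        + (fun w b => if b then Function.update p i t w else 1 - Function.update p i t w) w false
        = 1 := by
      intro w
      show Function.update p i t w + (1 - Function.update p i t w) = 1
      ring
    have e1 : (∑ x : ν → Bool,
        (∏ w, if x w then Function.update p i t w else 1 - Function.update p i t w) *
          (if reach x trueT then (1 : ℝ) else 0))
        = ∑ v ∈ internal.filter (fun v => lab v = i), ∑ x : ν → Bool,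
            (∏ w, if x w then Function.update p i t w else 1 - Function.update p i t w) *
              ((if reach x v then (1:ℝ) else 0) * (if reach x trueT then (1:ℝ) else 0)) := by
      refine (Finset.sum_congr rfl (fun x _ => ?_)).trans Finset.sum_comm
      calc (∏ w, if x w then Function.update p i t w else 1 - Function.update p i t w) *
            (if reach x trueT then (1 : ℝ) else 0)
          = ∑ v ∈ internal.filter (fun v => lab v = i),
              (if reach x v then (1:ℝ) else 0) *
              ((∏ w, if x w then Function.update p i t w else 1 - Function.update p i t w) *
                (if reach x trueT then (1 : ℝ) else 0)) := by
            rw [← Finset.sum_mul, hpart x, one_mul]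
        _ = ∑ v ∈ internal.filter (fun v => lab v = i),
              (∏ w, if x w then Function.update p i t w else 1 - Function.update p i t w) *
                ((if reach x v then (1:ℝ) else 0) * (if reach x trueT then (1:ℝ) else 0)) :=
            Finset.sum_congr rfl (fun v _ => by ring)
    rw [e1]
    refine Finset.sum_congr rfl (fun v hv => ?_)
    obtain ⟨hvi, hvlab⟩ := Finset.mem_filter.mp hv
    have hordvi : ord (lab v) = ord i := by rw [hvlab]
    -- rewrite the acceptance indicator through node v
    have estep : ∀ x : ν → Bool,
        (∏ w, if x w then Function.update p i t w else 1 - Function.update p i t w) *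
          ((if reach x v then (1:ℝ) else 0) * (if reach x trueT then (1:ℝ) else 0))
        = (∏ w, if x w then Function.update p i t w else 1 - Function.update p i t w) *
            (((if reach x v then (1:ℝ) else 0) * (if x i then (1:ℝ) else 0)) *
              (if Ev internal Tc Fc lab x (internal.card + 1) (Tc v) = trueT then (1:ℝ) else 0))
        + (∏ w, if x w then Function.update p i t w else 1 - Function.update p i t w) *
            (((if reach x v then (1:ℝ) else 0) * (if x i then (0:ℝ) else 1)) *
              (if Ev internal Tc Fc lab x (internal.card + 1) (Fc v) = trueT then (1:ℝ) else 0)) := by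
      intro x
      by_cases hr : reach x v = true
      · have hiff := acc_from internal Tc Fc lab ord root reach horder hroot hreach_root
          hreach trueT htne x v hvi hr
        have hacc : (if reach x trueT then (1:ℝ) else 0)
            = (if Ev internal Tc Fc lab x (internal.card + 1) v = trueT then (1:ℝ) else 0) :=
          if_congr hiff rfl rfl
        rw [hacc, Ev_rec_N internal Tc Fc lab ord horder x v hvi, hvlab]
        by_cases hb : x i = true
        · simp [hb]
        · have hb' : x i = false := by simpa using hb
          simp [hb']
      · have h0 : (if reach x v then (1:ℝ) else 0) = 0 := if_neg hr
        rw [h0]; ring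
    rw [Finset.sum_congr rfl (fun x _ => estep x), Finset.sum_add_distrib]
    -- dependence facts
    have hfv : ∀ x y : ν → Bool, (∀ w ∈ {w | ord w < ord i}, x w = y w) →
        (fun x : ν → Bool => if reach x v then (1:ℝ) else 0) x
        = (fun x : ν → Bool => if reach x v then (1:ℝ) else 0) y := by
      intro x y hxy
      show (if reach x v then (1:ℝ) else 0) = (if reach y v then (1:ℝ) else 0)
      rw [reach_depends internal Tc Fc lab ord root reach horder hreach_root hreach
        (ord (lab v)) x y v (Or.inr hvi) le_rfl
        (fun w hw => hxy w (by simp only [Set.mem_setOf_eq]; omega))]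
    have hgxi : ∀ x y : ν → Bool, (∀ w ∉ {w | ord w < ord i}, x w = y w) →
        (fun x : ν → Bool => if x i then (1:ℝ) else 0) x
        = (fun x : ν → Bool => if x i then (1:ℝ) else 0) y := by
      intro x y hxy
      show (if x i then (1:ℝ) else 0) = (if y i then (1:ℝ) else 0)
      rw [hxy i (by simp)]
    have hgxi' : ∀ x y : ν → Bool, (∀ w ∉ {w | ord w < ord i}, x w = y w) →
        (fun x : ν → Bool => if x i then (0:ℝ) else 1) x
        = (fun x : ν → Bool => if x i then (0:ℝ) else 1) y := by
      intro x y hxy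
      show (if x i then (0:ℝ) else 1) = (if y i then (0:ℝ) else 1)
      rw [hxy i (by simp)]
    have hgT : ∀ (c : V), c ∈ internal → ord i < ord (lab c) →
        ∀ (S : Set ν), (∀ w, ord i < ord w → w ∈ S) →
        ∀ x y : ν → Bool, (∀ w ∈ S, x w = y w) →
        (if Ev internal Tc Fc lab x (internal.card + 1) c = trueT then (1:ℝ) else 0)
        = (if Ev internal Tc Fc lab y (internal.card + 1) c = trueT then (1:ℝ) else 0) := by
      intro c hc hordc S hS x y hxy
      rw [Ev_depends internal Tc Fc lab ord horder (internal.card + 1) x y c hc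
        (fun w hw => hxy w (hS w (by omega)))]
    have hgImp : ∀ (c : V), (Tc v = c ∨ Fc v = c) →
        ∀ (S : Set ν), (∀ w, ord i < ord w → w ∈ S) →
        ∀ x y : ν → Bool, (∀ w ∈ S, x w = y w) →
        (fun x : ν → Bool =>
          if Ev internal Tc Fc lab x (internal.card + 1) c = trueT then (1:ℝ) else 0) x
        = (fun x : ν → Bool =>
          if Ev internal Tc Fc lab x (internal.card + 1) c = trueT then (1:ℝ) else 0) y := by
      intro c hcv S hS x y hxy
      show (if Ev internal Tc Fc lab x (internal.card + 1) c = trueT then (1:ℝ) else 0)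
        = (if Ev internal Tc Fc lab y (internal.card + 1) c = trueT then (1:ℝ) else 0)
      by_cases hci : c ∈ internal
      · have hordc : ord i < ord (lab c) := by
          rcases hcv with h | h
          · have := (horder v hvi).1 (h ▸ hci); rw [h] at this; omega
          · have := (horder v hvi).2 (h ▸ hci); rw [h] at this; omega
        exact hgT c hci hordc S hS x y hxy
      · rw [Ev_nonint internal Tc Fc lab x (internal.card + 1) c hci,
          Ev_nonint internal Tc Fc lab y (internal.card + 1) c hci]
    -- evaluation of elementary sums
    have hqq : ∀ S : Set ν, (i ∉ S) → ∀ w ∈ S,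
        (fun b : Bool => if b then Function.update p i t w else 1 - Function.update p i t w)
        = (fun b : Bool => if b then p w else 1 - p w) := by
      intro S hiS w hw
      have hne : w ≠ i := fun h => hiS (h ▸ hw)
      funext b
      show (if b then Function.update p i t w else 1 - Function.update p i t w)
        = (if b then p w else 1 - p w)
      rw [Function.update_of_ne hne]
    have hc1 : (∑ x : ν → Bool,
        (∏ w, if x w then Function.update p i t w else 1 - Function.update p i t w) *
          (if reach x v then (1:ℝ) else 0)) = mtd v := by
      calc (∑ x : ν → Bool,
          (∏ w, if x w then Function.update p i t w else 1 - Function.update p i t w) *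
            (if reach x v then (1:ℝ) else 0))
          = ∑ x : ν → Bool, (∏ w, if x w then p w else 1 - p w) *
              (if reach x v then (1:ℝ) else 0) :=
            marg_indep
              (fun w b => if b then Function.update p i t w else 1 - Function.update p i t w)
              (fun w b => if b then p w else 1 - p w) hqt hq0 {w | ord w < ord i}
              (hqq {w | ord w < ord i} (fun h => Nat.lt_irrefl (ord i) h)) (fun x : ν → Bool => if reach x v then (1:ℝ) else 0) hfv
        _ = mtd v := TD (ord (lab v)) v (Or.inr hvi) le_rfl
    have hc2 : (∑ x : ν → Bool,
        (∏ w, if x w then Function.update p i t w else 1 - Function.update p i t w) *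
          (if x i then (1:ℝ) else 0)) = t := by
      calc (∑ x : ν → Bool,
          (∏ w, if x w then Function.update p i t w else 1 - Function.update p i t w) *
            (if x i then (1:ℝ) else 0))
          = Function.update p i t i * 1 + (1 - Function.update p i t i) * 0 :=
            exp_coord
              (fun w b => if b then Function.update p i t w else 1 - Function.update p i t w)
              hqt i 1 0
        _ = t := by rw [Function.update_self]; ring
    have hc2' : (∑ x : ν → Bool,
        (∏ w, if x w then Function.update p i t w else 1 - Function.update p i t w) *
          (if x i then (0:ℝ) else 1)) = 1 - t := by
      calc (∑ x : ν → Bool,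
          (∏ w, if x w then Function.update p i t w else 1 - Function.update p i t w) *
            (if x i then (0:ℝ) else 1))
          = Function.update p i t i * 0 + (1 - Function.update p i t i) * 1 :=
            exp_coord
              (fun w b => if b then Function.update p i t w else 1 - Function.update p i t w)
              hqt i 0 1
        _ = 1 - t := by rw [Function.update_self]; ring
    have hcT : (∑ x : ν → Bool,
        (∏ w, if x w then Function.update p i t w else 1 - Function.update p i t w) *
          (if Ev internal Tc Fc lab x (internal.card + 1) (Tc v) = trueT then (1:ℝ) else 0))
        = mbu (Tc v) := by
      calc (∑ x : ν → Bool,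
          (∏ w, if x w then Function.update p i t w else 1 - Function.update p i t w) *
            (if Ev internal Tc Fc lab x (internal.card + 1) (Tc v) = trueT then (1:ℝ) else 0))
          = ∑ x : ν → Bool, (∏ w, if x w then p w else 1 - p w) *
              (if Ev internal Tc Fc lab x (internal.card + 1) (Tc v) = trueT then (1:ℝ) else 0) :=
            marg_indep
              (fun w b => if b then Function.update p i t w else 1 - Function.update p i t w)
              (fun w b => if b then p w else 1 - p w) hqt hq0 {w | ord i < ord w}
              (hqq {w | ord i < ord w} (fun h => Nat.lt_irrefl (ord i) h))
              (fun x : ν → Bool =>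
                if Ev internal Tc Fc lab x (internal.card + 1) (Tc v) = trueT then (1:ℝ) else 0)
              (hgImp (Tc v) (Or.inl rfl) {w | ord i < ord w} (fun w hw => hw))
        _ = mbu (Tc v) := BUall (Tc v)
    have hcF : (∑ x : ν → Bool,
        (∏ w, if x w then Function.update p i t w else 1 - Function.update p i t w) *
          (if Ev internal Tc Fc lab x (internal.card + 1) (Fc v) = trueT then (1:ℝ) else 0))
        = mbu (Fc v) := by
      calc (∑ x : ν → Bool,
          (∏ w, if x w then Function.update p i t w else 1 - Function.update p i t w) *
            (if Ev internal Tc Fc lab x (internal.card + 1) (Fc v) = trueT then (1:ℝ) else 0))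
          = ∑ x : ν → Bool, (∏ w, if x w then p w else 1 - p w) *
              (if Ev internal Tc Fc lab x (internal.card + 1) (Fc v) = trueT then (1:ℝ) else 0) :=
            marg_indep
              (fun w b => if b then Function.update p i t w else 1 - Function.update p i t w)
              (fun w b => if b then p w else 1 - p w) hqt hq0 {w | ord i < ord w}
              (hqq {w | ord i < ord w} (fun h => Nat.lt_irrefl (ord i) h))
              (fun x : ν → Bool =>
                if Ev internal Tc Fc lab x (internal.card + 1) (Fc v) = trueT then (1:ℝ) else 0)
              (hgImp (Fc v) (Or.inr rfl) {w | ord i < ord w} (fun w hw => hw))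
        _ = mbu (Fc v) := BUall (Fc v)
    -- two-stage factorizations
    have hfact2 : (∑ x : ν → Bool,
        (∏ w, if x w then Function.update p i t w else 1 - Function.update p i t w) *
          ((if reach x v then (1:ℝ) else 0) * (if x i then (1:ℝ) else 0)))
        = (∑ x : ν → Bool,
            (∏ w, if x w then Function.update p i t w else 1 - Function.update p i t w) *
              (if reach x v then (1:ℝ) else 0))
          * (∑ x : ν → Bool,
            (∏ w, if x w then Function.update p i t w else 1 - Function.update p i t w) *
              (if x i then (1:ℝ) else 0)) :=
      fact_indep
        (fun w b => if b then Function.update p i t w else 1 - Function.update p i t w)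
        hqt {w | ord w < ord i}
        (fun x : ν → Bool => if reach x v then (1:ℝ) else 0)
        (fun x : ν → Bool => if x i then (1:ℝ) else 0) hfv hgxi
    have hfact2' : (∑ x : ν → Bool,
        (∏ w, if x w then Function.update p i t w else 1 - Function.update p i t w) *
          ((if reach x v then (1:ℝ) else 0) * (if x i then (0:ℝ) else 1)))
        = (∑ x : ν → Bool,
            (∏ w, if x w then Function.update p i t w else 1 - Function.update p i t w) *
              (if reach x v then (1:ℝ) else 0))
          * (∑ x : ν → Bool,
            (∏ w, if x w then Function.update p i t w else 1 - Function.update p i t w) *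
              (if x i then (0:ℝ) else 1)) :=
      fact_indep
        (fun w b => if b then Function.update p i t w else 1 - Function.update p i t w)
        hqt {w | ord w < ord i}
        (fun x : ν → Bool => if reach x v then (1:ℝ) else 0)
        (fun x : ν → Bool => if x i then (0:ℝ) else 1) hfv hgxi'
    have hf1 : ∀ x y : ν → Bool, (∀ w ∈ {w | ord w ≤ ord i}, x w = y w) →
        (fun x : ν → Bool => (if reach x v then (1:ℝ) else 0) * (if x i then (1:ℝ) else 0)) x
        = (fun x : ν → Bool => (if reach x v then (1:ℝ) else 0) * (if x i then (1:ℝ) else 0)) y := by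
      intro x y hxy
      show (if reach x v then (1:ℝ) else 0) * (if x i then (1:ℝ) else 0)
        = (if reach y v then (1:ℝ) else 0) * (if y i then (1:ℝ) else 0)
      rw [reach_depends internal Tc Fc lab ord root reach horder hreach_root hreach
        (ord (lab v)) x y v (Or.inr hvi) le_rfl
        (fun w hw => hxy w (by simp only [Set.mem_setOf_eq]; omega)),
        hxy i (by simp)]
    have hf1' : ∀ x y : ν → Bool, (∀ w ∈ {w | ord w ≤ ord i}, x w = y w) →
        (fun x : ν → Bool => (if reach x v then (1:ℝ) else 0) * (if x i then (0:ℝ) else 1)) x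
        = (fun x : ν → Bool => (if reach x v then (1:ℝ) else 0) * (if x i then (0:ℝ) else 1)) y := by
      intro x y hxy
      show (if reach x v then (1:ℝ) else 0) * (if x i then (0:ℝ) else 1)
        = (if reach y v then (1:ℝ) else 0) * (if y i then (0:ℝ) else 1)
      rw [reach_depends internal Tc Fc lab ord root reach horder hreach_root hreach
        (ord (lab v)) x y v (Or.inr hvi) le_rfl
        (fun w hw => hxy w (by simp only [Set.mem_setOf_eq]; omega)),
        hxy i (by simp)]
    have hfactT : (∑ x : ν → Bool,
        (∏ w, if x w then Function.update p i t w else 1 - Function.update p i t w) *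
          (((if reach x v then (1:ℝ) else 0) * (if x i then (1:ℝ) else 0)) *
            (if Ev internal Tc Fc lab x (internal.card + 1) (Tc v) = trueT then (1:ℝ) else 0)))
        = (∑ x : ν → Bool,
            (∏ w, if x w then Function.update p i t w else 1 - Function.update p i t w) *
              ((if reach x v then (1:ℝ) else 0) * (if x i then (1:ℝ) else 0)))
          * (∑ x : ν → Bool,
            (∏ w, if x w then Function.update p i t w else 1 - Function.update p i t w) *
              (if Ev internal Tc Fc lab x (internal.card + 1) (Tc v) = trueT then (1:ℝ) else 0)) :=
      fact_indep
        (fun w b => if b then Function.update p i t w else 1 - Function.update p i t w)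
        hqt {w | ord w ≤ ord i}
        (fun x : ν → Bool => (if reach x v then (1:ℝ) else 0) * (if x i then (1:ℝ) else 0))
        (fun x : ν → Bool =>
          if Ev internal Tc Fc lab x (internal.card + 1) (Tc v) = trueT then (1:ℝ) else 0)
        hf1
        (hgImp (Tc v) (Or.inl rfl) {w | ord w ≤ ord i}ᶜ
          (fun w hw => by simp only [Set.mem_compl_iff, Set.mem_setOf_eq]; omega))
    have hfactF : (∑ x : ν → Bool,
        (∏ w, if x w then Function.update p i t w else 1 - Function.update p i t w) *
          (((if reach x v then (1:ℝ) else 0) * (if x i then (0:ℝ) else 1)) *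
            (if Ev internal Tc Fc lab x (internal.card + 1) (Fc v) = trueT then (1:ℝ) else 0)))
        = (∑ x : ν → Bool,
            (∏ w, if x w then Function.update p i t w else 1 - Function.update p i t w) *
              ((if reach x v then (1:ℝ) else 0) * (if x i then (0:ℝ) else 1)))
          * (∑ x : ν → Bool,
            (∏ w, if x w then Function.update p i t w else 1 - Function.update p i t w) *
              (if Ev internal Tc Fc lab x (internal.card + 1) (Fc v) = trueT then (1:ℝ) else 0)) :=
      fact_indep
        (fun w b => if b then Function.update p i t w else 1 - Function.update p i t w)
        hqt {w | ord w ≤ ord i}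
        (fun x : ν → Bool => (if reach x v then (1:ℝ) else 0) * (if x i then (0:ℝ) else 1))
        (fun x : ν → Bool =>
          if Ev internal Tc Fc lab x (internal.card + 1) (Fc v) = trueT then (1:ℝ) else 0)
        hf1'
        (hgImp (Fc v) (Or.inr rfl) {w | ord w ≤ ord i}ᶜ
          (fun w hw => by simp only [Set.mem_compl_iff, Set.mem_setOf_eq]; omega))
    rw [hfactT, hfactF, hfact2, hfact2', hc1, hc2, hc2', hcT, hcF]
    ring
  ---------------------------------------------------------------------------
  -- conclusion
  ---------------------------------------------------------------------------
  constructor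
  · have h := key (p i)
    rw [Function.update_eq_self i p] at h
    exact h
  · have heq : (fun t : ℝ => ∑ x : ν → Bool,
        (∏ w, if x w then Function.update p i t w else 1 - Function.update p i t w) *
          (if reach x trueT then (1 : ℝ) else 0))
        = fun t : ℝ =>
            (∑ v ∈ internal.filter (fun v => lab v = i), mtd v * (mbu (Tc v) - mbu (Fc v))) * t
            + ∑ v ∈ internal.filter (fun v => lab v = i), mtd v * mbu (Fc v) := by
      funext t
      rw [key t, Finset.sum_mul, ← Finset.sum_add_distrib]
      exact Finset.sum_congr rfl (fun v _ => by ring)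
    rw [heq]
    simpa using
      (((hasDerivAt_id (p i)).const_mul
          (∑ v ∈ internal.filter (fun v => lab v = i), mtd v * (mbu (Tc v) - mbu (Fc v)))).add_const
        (∑ v ∈ internal.filter (fun v => lab v = i), mtd v * mbu (Fc v)))
end
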